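/- arXiv:2101.00242 — 2 statements merged into one kernel-verified Lean document; each statement's English description precedes it below -/
import Mathlib

section
/- Lemma 3.3 (bounds on the scaled r-derivatives). Let (Ū, V̄) be a C¹ solution of system (3.8) on Ω such that R := t·∂_r Ū and S := t·∂_r V̄ extend continuously to Ω ∪ Γ, where Γ = {(t, r̃(t)) : 0 < t ≤ t₀}. Set k₀ = (κ+2)/(κ(1−t₀²)), ε₀ = min{t₀, 1/(4k₀)}, Ω₁ = Ω ∩ {t ≤ ε₀}, Ω₂ = Ω ∩ {t ≥ ε₀}, and suppose the quantity M̄ = 1 + 2·max{ sup_{Ω₂} max(|R|,|S|), sup_Γ max(|R|,|S|) } is finite. Then |R(t,r)| < M̄ and |S(t,r)| < M̄ for every (t,r) ∈ Ω₁. -/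
/-- Partial derivative in the first (t) variable. -/
noncomputable def pdt (f : ℝ × ℝ → ℝ) (p : ℝ × ℝ) : ℝ := fderiv ℝ f p (1, 0)

/-- Partial derivative in the second (r) variable. -/
noncomputable def pdr (f : ℝ × ℝ → ℝ) (p : ℝ × ℝ) : ℝ := fderiv ℝ f p (0, 1)

/-- The characteristic speed λ(t) = √(1−t²)·t²/F(t), F(t) = (1−t²)(κ+1−t²). -/
noncomputable def lam (κ t : ℝ) : ℝ :=
  Real.sqrt (1 - t^2) * t^2 / ((1 - t^2) * (κ + 1 - t^2))

/-- ř(t) = r₀ − ∫ₜ^{t₀} λ(s) ds, the positive characteristic through (t₀,r₀). -/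
noncomputable def rcheck (κ t₀ r₀ t : ℝ) : ℝ := r₀ - ∫ s in t..t₀, lam κ s

/-- The region Ω = {(t,r) : 0 < t ≤ t₀, r̃(t) ≤ r ≤ ř(t)}. -/
def region (κ t₀ r₀ : ℝ) (rt : ℝ → ℝ) : Set (ℝ × ℝ) :=
  {p : ℝ × ℝ | 0 < p.1 ∧ p.1 ≤ t₀ ∧ rt p.1 ≤ p.2 ∧ p.2 ≤ rcheck κ t₀ r₀ p.1}

/-- The linear system (3.8) holding at every point of a set `D`. -/
def Sys38 (κ : ℝ) (Ub Vb : ℝ × ℝ → ℝ) (D : Set (ℝ × ℝ)) : Prop :=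
  ∀ p ∈ D,
    pdt Ub p + lam κ p.1 * pdr Ub p =
      (Ub p - Vb p) / (2 * p.1)
      + ((κ + 2 - p.1^2) * p.1 / (2 * ((1 - p.1^2) * (κ + 1 - p.1^2)))) * (Ub p - Vb p)
      - ((κ + 2 - 2*p.1^2) * p.1 / ((1 - p.1^2) * (κ + 1 - p.1^2))) * Ub p ∧
    pdt Vb p - lam κ p.1 * pdr Vb p =
      (Vb p - Ub p) / (2 * p.1)
      - ((κ + 2 - p.1^2) * p.1 / (2 * ((1 - p.1^2) * (κ + 1 - p.1^2)))) * (Ub p - Vb p)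
      - ((κ + 2 - 2*p.1^2) * p.1 / ((1 - p.1^2) * (κ + 1 - p.1^2))) * Vb p

/-
Fix `p ∈ Ω₁` and let `M` be the supremum of `max(|R|, |S|)` over the compact slab
`Ω ∩ {p.1 ≤ t ≤ ε₀}`. Since `Ū, V̄` are only `C¹`, one cannot differentiate (3.8) in `r`; instead,
along a characteristic `r = X(t)` of the `Ū`-equation, the increments `ψ(t) = Ū(t, X + h) - Ū(t, X)`
and `φ(t) = V̄(t, X + h) - V̄(t, X)` satisfy `ψ' = (ψ - φ)/(2t) + a(ψ - φ) - bψ` with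
`|a| ≤ k₀t/2`, `|b| ≤ k₀t`, and `|ψ|, |φ| ≤ hM/t`. For `ψ/√t` the singular term reduces to
`-φ/(2t)`, and integrating up to the point where the characteristic leaves the slab (through
`t = ε₀` or through `Γ`, where `|R|, |S| ≤ B`) gives `p.1 |ψ(p.1)| ≤ h (max(B, M/3) + 4k₀ε₀²M)`,
and `4k₀ε₀² ≤ 1/4`. Letting `h → 0`, and arguing likewise for `S`, `M ≥ 1 + 2B` would force
`M ≤ 3M/4`.
-/

open Set Filter Topology

theorem abs_sub_le_of_abs_deriv_le {f g f' g' : ℝ → ℝ} {a b : ℝ} (hab : a ≤ b)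
    (hf : ContinuousOn f (Icc a b)) (hg : ContinuousOn g (Icc a b))
    (hf' : ∀ x ∈ Ioo a b, HasDerivAt f (f' x) x) (hg' : ∀ x ∈ Ioo a b, HasDerivAt g (g' x) x)
    (hbound : ∀ x ∈ Ioo a b, |f' x| ≤ g' x) :
    |f b - f a| ≤ g b - g a := by
  have mono : ∀ c : ℝ, |c| ≤ 1 → g a - c * f a ≤ g b - c * f b := by
    intro c hc
    have hderiv : ∀ x ∈ Ioo a b, HasDerivAt (fun y => g y - c * f y) (g' x - c * f' x) x :=
      fun x hx => (hg' x hx).sub ((hf' x hx).const_mul c)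
    refine monotoneOn_of_deriv_nonneg (f := fun y => g y - c * f y) (convex_Icc a b)
      (hg.sub (continuousOn_const.mul hf)) ?_ ?_
      (left_mem_Icc.2 hab) (right_mem_Icc.2 hab) hab
    · rw [interior_Icc]
      exact fun x hx => (hderiv x hx).differentiableAt.differentiableWithinAt
    · rw [interior_Icc]
      intro x hx
      rw [(hderiv x hx).deriv, sub_nonneg]
      calc c * f' x ≤ |c * f' x| := le_abs_self _
        _ = |c| * |f' x| := abs_mul _ _
        _ ≤ 1 * g' x := mul_le_mul hc (hbound x hx) (abs_nonneg _) zero_le_one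
        _ = g' x := one_mul _
  have h₁ := mono 1 (by norm_num)
  have h₂ := mono (-1) (by norm_num)
  rw [abs_sub_le_iff]
  constructor <;> linarith

theorem abs_le_of_hasDerivAt_of_eventually_le {f : ℝ → ℝ} {f' C : ℝ} (hf : HasDerivAt f f' 0)
    (hC : ∀ᶠ h in 𝓝[>] 0, |f h - f 0| ≤ h * C) : |f'| ≤ C := by
  have hslope : Tendsto (fun h => |slope f 0 h|) (𝓝[>] 0) (𝓝 |f'|) :=
    ((hasDerivAt_iff_tendsto_slope.1 hf).mono_left (nhdsGT_le_nhdsNE 0)).abs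
  refine le_of_tendsto hslope ?_
  filter_upwards [hC, self_mem_nhdsWithin] with h hh (hpos : 0 < h)
  rw [slope_def_field, sub_zero, abs_div, abs_of_pos hpos, div_le_iff₀ hpos, mul_comm]
  exact hh

theorem hasDerivAt_div_sqrt {ψ : ℝ → ℝ} {ψ' s : ℝ} (hψ : HasDerivAt ψ ψ' s) (hs : 0 < s) :
    HasDerivAt (fun x => ψ x / √x) ((ψ' - ψ s / (2 * s)) / √s) s := by
  refine (hψ.div (Real.hasDerivAt_sqrt hs.ne') (Real.sqrt_pos.2 hs).ne').congr_deriv ?_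
  have := Real.sqrt_pos.2 hs
  field_simp
  rw [Real.sq_sqrt hs.le]
  ring

theorem hasDerivAt_mul_sqrt_sub_inv (k : ℝ) {s : ℝ} (hs : 0 < s) :
    HasDerivAt (fun x => 4 * k * √x - (3 * (x * √x))⁻¹) (2 * k / √s + 1 / (2 * s ^ 2 * √s)) s := by
  have := Real.sqrt_pos.2 hs
  refine (((Real.hasDerivAt_sqrt hs.ne').const_mul (4 * k)).sub
    ((((hasDerivAt_id' s).mul (Real.hasDerivAt_sqrt hs.ne')).const_mul 3).inv
      (by simp only [Pi.mul_apply]; positivity))).congr_deriv ?_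
  simp only [Pi.mul_apply]
  field_simp
  rw [Real.sq_sqrt hs.le]
  ring

theorem abs_neg_div_add_mul_sub_mul_le {x y a b s k N : ℝ} (hs : 0 < s) (hx : |x| ≤ N / s)
    (hy : |y| ≤ N / s) (ha : |a| ≤ k * s / 2) (hb : |b| ≤ k * s) :
    |-y / (2 * s) + a * (x - y) - b * x| ≤ N / (2 * s ^ 2) + 2 * k * N := by
  have hxy : |x - y| ≤ 2 * N / s := by
    rw [mul_div_assoc]
    linarith [abs_sub x y]
  have h₁ : |-y / (2 * s)| ≤ N / (2 * s ^ 2) := by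
    rw [abs_div, abs_neg, abs_of_pos (by positivity : (0 : ℝ) < 2 * s)]
    calc |y| / (2 * s) ≤ N / s / (2 * s) := by gcongr
      _ = N / (2 * s ^ 2) := by field_simp
  have h₂ : |a * (x - y)| ≤ k * N := by
    calc |a * (x - y)| = |a| * |x - y| := abs_mul _ _
      _ ≤ k * s / 2 * (2 * N / s) := mul_le_mul ha hxy (abs_nonneg _) ((abs_nonneg _).trans ha)
      _ = k * N := by field_simp
  have h₃ : |b * x| ≤ k * N := by
    calc |b * x| = |b| * |x| := abs_mul _ _
      _ ≤ k * s * (N / s) := mul_le_mul hb hx (abs_nonneg _) ((abs_nonneg _).trans hb)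
      _ = k * N := by field_simp
  linarith [abs_sub (-y / (2 * s) + a * (x - y)) (b * x), abs_add_le (-y / (2 * s)) (a * (x - y))]

/- For `ψ / √s` the singular term `ψ / (2s)` of the equation cancels, and the rest of the
right-hand side is bounded by the derivative of `N (4k√s - 1/(3 s√s))`. -/
theorem abs_div_sqrt_sub_le {ψ φ α β : ℝ → ℝ} {a b k N : ℝ} (ha : 0 < a) (hab : a ≤ b)
    (hψ : ContinuousOn ψ (Icc a b))
    (hψ' : ∀ s ∈ Ioo a b,
      HasDerivAt ψ ((ψ s - φ s) / (2 * s) + α s * (ψ s - φ s) - β s * ψ s) s)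
    (hψN : ∀ s ∈ Ioo a b, |ψ s| ≤ N / s) (hφN : ∀ s ∈ Ioo a b, |φ s| ≤ N / s)
    (hα : ∀ s ∈ Ioo a b, |α s| ≤ k * s / 2) (hβ : ∀ s ∈ Ioo a b, |β s| ≤ k * s) :
    |ψ b / √b - ψ a / √a| ≤
      N * (4 * k * √b - (3 * (b * √b))⁻¹) - N * (4 * k * √a - (3 * (a * √a))⁻¹) := by
  have hpos : ∀ s ∈ Icc a b, 0 < s := fun s hs => ha.trans_le hs.1
  refine abs_sub_le_of_abs_deriv_le (f := fun s => ψ s / √s)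
    (g := fun s => N * (4 * k * √s - (3 * (s * √s))⁻¹)) hab
    (hψ.div Real.continuous_sqrt.continuousOn fun s hs => (Real.sqrt_pos.2 (hpos s hs)).ne')
    (continuousOn_const.mul ((continuousOn_const.mul Real.continuous_sqrt.continuousOn).sub
      (ContinuousOn.inv₀ (by fun_prop) fun s hs => by have := hpos s hs; positivity)))
    (fun s hs => hasDerivAt_div_sqrt (hψ' s hs) (hpos s (Ioo_subset_Icc_self hs)))
    (fun s hs => (hasDerivAt_mul_sqrt_sub_inv k (hpos s (Ioo_subset_Icc_self hs))).const_mul N)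
    fun s hs => ?_
  have hs0 := hpos s (Ioo_subset_Icc_self hs)
  have hr0 := Real.sqrt_pos.2 hs0
  have hrhs := abs_neg_div_add_mul_sub_mul_le hs0 (hψN s hs) (hφN s hs) (hα s hs) (hβ s hs)
  rw [abs_div, abs_of_pos hr0, div_le_iff₀ hr0]
  calc |(ψ s - φ s) / (2 * s) + α s * (ψ s - φ s) - β s * ψ s - ψ s / (2 * s)|
      = |-φ s / (2 * s) + α s * (ψ s - φ s) - β s * ψ s| := by ring_nf
    _ ≤ N / (2 * s ^ 2) + 2 * k * N := hrhs
    _ = N * (2 * k / √s + 1 / (2 * s ^ 2 * √s)) * √s := by field_simp; ring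

theorem mul_abs_le_of_hasDerivAt {ψ φ α β : ℝ → ℝ} {a b k N : ℝ} (ha : 0 < a) (hab : a ≤ b)
    (hk : 0 ≤ k) (hN : 0 ≤ N) (hψ : ContinuousOn ψ (Icc a b))
    (hψ' : ∀ s ∈ Ioo a b,
      HasDerivAt ψ ((ψ s - φ s) / (2 * s) + α s * (ψ s - φ s) - β s * ψ s) s)
    (hψN : ∀ s ∈ Ioo a b, |ψ s| ≤ N / s) (hφN : ∀ s ∈ Ioo a b, |φ s| ≤ N / s)
    (hα : ∀ s ∈ Ioo a b, |α s| ≤ k * s / 2) (hβ : ∀ s ∈ Ioo a b, |β s| ≤ k * s) :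
    a * |ψ a| ≤ max (b * |ψ b|) (N / 3) + 4 * k * b ^ 2 * N := by
  have key := abs_div_sqrt_sub_le ha hab hψ hψ' hψN hφN hα hβ
  obtain ⟨u, hu, rfl⟩ : ∃ u, 0 < u ∧ a = u ^ 2 :=
    ⟨√a, Real.sqrt_pos.2 ha, (Real.sq_sqrt ha.le).symm⟩
  obtain ⟨v, hv, rfl⟩ : ∃ v, 0 < v ∧ b = v ^ 2 :=
    ⟨√b, Real.sqrt_pos.2 (ha.trans_le hab), (Real.sq_sqrt (ha.trans_le hab).le).symm⟩
  rw [Real.sqrt_sq hu.le, Real.sqrt_sq hv.le] at key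
  have huv : u ≤ v := (pow_le_pow_iff_left₀ hu.le hv.le two_ne_zero).1 hab
  set θ := u ^ 3 / v ^ 3 with hθ
  have hθ0 : 0 ≤ θ := by positivity
  have hθ1 : θ ≤ 1 := div_le_one_of_le₀ (by gcongr) (by positivity)
  have hstep : |ψ (u ^ 2)| / u ≤ |ψ (v ^ 2)| / v + (N * (4 * k * v - (3 * (v ^ 2 * v))⁻¹) -
      N * (4 * k * u - (3 * (u ^ 2 * u))⁻¹)) := by
    have := abs_sub_abs_le_abs_sub (ψ (u ^ 2) / u) (ψ (v ^ 2) / v)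
    rw [abs_sub_comm, abs_div, abs_div, abs_of_pos hu, abs_of_pos hv] at this
    linarith
  calc u ^ 2 * |ψ (u ^ 2)| = u ^ 3 * (|ψ (u ^ 2)| / u) := by field_simp
    _ ≤ u ^ 3 * (|ψ (v ^ 2)| / v + (N * (4 * k * v - (3 * (v ^ 2 * v))⁻¹) -
        N * (4 * k * u - (3 * (u ^ 2 * u))⁻¹))) := by gcongr
    _ = θ * (v ^ 2 * |ψ (v ^ 2)|) + (1 - θ) * (N / 3) + 4 * k * N * (u ^ 3 * (v - u)) := by
      rw [hθ]; field_simp; ring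
    _ ≤ max (v ^ 2 * |ψ (v ^ 2)|) (N / 3) + 4 * k * (v ^ 2) ^ 2 * N := by
      have hconv : θ * (v ^ 2 * |ψ (v ^ 2)|) + (1 - θ) * (N / 3) ≤
          max (v ^ 2 * |ψ (v ^ 2)|) (N / 3) := by
        nlinarith [le_max_left (v ^ 2 * |ψ (v ^ 2)|) (N / 3),
          le_max_right (v ^ 2 * |ψ (v ^ 2)|) (N / 3)]
      have hcube : u ^ 3 * (v - u) ≤ (v ^ 2) ^ 2 := by
        calc u ^ 3 * (v - u) ≤ v ^ 3 * v := by gcongr; linarith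
          _ = (v ^ 2) ^ 2 := by ring
      have := mul_le_mul_of_nonneg_left hcube (by positivity : 0 ≤ 4 * k * N)
      linarith

section Characteristics

variable {κ σ t₀ r₀ s : ℝ} {p : ℝ × ℝ}

theorem lam_nonneg (hκ : 0 ≤ κ) (hs : s ^ 2 ≤ 1) : 0 ≤ lam κ s := by
  unfold lam
  have : 0 ≤ κ + 1 - s ^ 2 := by linarith
  have : 0 ≤ 1 - s ^ 2 := by linarith
  positivity

theorem continuousAt_lam (hκ : 0 ≤ κ) (hs : s ∈ Ioo (-1 : ℝ) 1) : ContinuousAt (lam κ) s := by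
  have h₁ : 0 < 1 - s ^ 2 := by nlinarith [hs.1, hs.2]
  have hden : (1 - s ^ 2) * (κ + 1 - s ^ 2) ≠ 0 := by
    have : 0 < κ + 1 - s ^ 2 := by linarith
    positivity
  unfold lam
  fun_prop (disch := assumption)

noncomputable def charCurve (κ σ : ℝ) (p : ℝ × ℝ) (s : ℝ) : ℝ :=
  p.2 + σ * ∫ u in p.1..s, lam κ u

@[simp]
theorem charCurve_fst : charCurve κ σ p p.1 = p.2 := by
  simp [charCurve]

theorem rcheck_eq_charCurve : rcheck κ t₀ r₀ = charCurve κ 1 (t₀, r₀) := by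
  ext t
  rw [rcheck, charCurve, intervalIntegral.integral_symm]
  ring

theorem hasDerivAt_charCurve (hκ : 0 ≤ κ) (hp : p.1 ∈ Ioo (-1 : ℝ) 1) (hs : s ∈ Ioo (-1 : ℝ) 1) :
    HasDerivAt (charCurve κ σ p) (σ * lam κ s) s := by
  have hcont : ContinuousOn (lam κ) (Ioo (-1 : ℝ) 1) :=
    fun x hx => (continuousAt_lam hκ hx).continuousWithinAt
  have hint : HasDerivAt (fun x => ∫ u in p.1..x, lam κ u) (lam κ s) s :=
    intervalIntegral.integral_hasDerivAt_right
      ((hcont.mono (ordConnected_Ioo.uIcc_subset hp hs)).intervalIntegrable)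
      (hcont.stronglyMeasurableAtFilter isOpen_Ioo s hs) (continuousAt_lam hκ hs)
  exact (hint.const_mul σ).const_add p.2

end Characteristics

structure IsSpacelikeBoundary (κ t₀ r₀ : ℝ) (rt : ℝ → ℝ) : Prop where
  kappa_nonneg : 0 ≤ κ
  t₀_mem : t₀ ∈ Ioo (0 : ℝ) 1
  continuousOn : ContinuousOn rt (Icc 0 t₀)
  apply_t₀ : rt t₀ = r₀
  lam_lt_deriv : ∀ t ∈ Ioc (0 : ℝ) t₀, lam κ t < deriv rt t

def openRegion (κ t₀ r₀ : ℝ) (rt : ℝ → ℝ) : Set (ℝ × ℝ) :=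
  {p : ℝ × ℝ | 0 < p.1 ∧ p.1 < t₀ ∧ rt p.1 < p.2 ∧ p.2 < rcheck κ t₀ r₀ p.1}

def boundaryCurve (t₀ : ℝ) (rt : ℝ → ℝ) : Set (ℝ × ℝ) :=
  {p : ℝ × ℝ | ∃ t ∈ Ioc (0 : ℝ) t₀, p = (t, rt t)}

theorem openRegion_subset_region {κ t₀ r₀ : ℝ} {rt : ℝ → ℝ} :
    openRegion κ t₀ r₀ rt ⊆ region κ t₀ r₀ rt :=
  fun _ ⟨h₀, h₁, h₂, h₃⟩ => ⟨h₀, h₁.le, h₂.le, h₃.le⟩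

@[simp]
theorem rcheck_self (κ t₀ r₀ : ℝ) : rcheck κ t₀ r₀ t₀ = r₀ := by
  simp [rcheck]

namespace IsSpacelikeBoundary

variable {κ t₀ r₀ s : ℝ} {rt : ℝ → ℝ} (hΓ : IsSpacelikeBoundary κ t₀ r₀ rt)
include hΓ

theorem lam_nonneg (hs : s ∈ Ioc 0 t₀) : 0 ≤ lam κ s :=
  _root_.lam_nonneg hΓ.kappa_nonneg (by nlinarith [hs.1, hs.2, hΓ.t₀_mem.2])

theorem hasDerivAt (hs : s ∈ Ioc 0 t₀) : HasDerivAt rt (deriv rt s) s :=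
  (differentiableAt_of_deriv_ne_zero
    ((hΓ.lam_nonneg hs).trans_lt (hΓ.lam_lt_deriv s hs)).ne').hasDerivAt

theorem mem_Ioo_neg_one_one {t : ℝ} (ht : t ∈ Ioc 0 t₀) : t ∈ Ioo (-1 : ℝ) 1 :=
  ⟨by linarith [ht.1], ht.2.trans_lt hΓ.t₀_mem.2⟩

theorem hasDerivAt_rcheck (hs : s ∈ Ioc 0 t₀) : HasDerivAt (rcheck κ t₀ r₀) (lam κ s) s := by
  rw [rcheck_eq_charCurve, ← one_mul (lam κ s)]
  exact hasDerivAt_charCurve hΓ.kappa_nonneg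
    (hΓ.mem_Ioo_neg_one_one ⟨hΓ.t₀_mem.1, le_rfl⟩) (hΓ.mem_Ioo_neg_one_one hs)

theorem continuousOn_rcheck : ContinuousOn (rcheck κ t₀ r₀) (Ioc 0 t₀) :=
  fun _ ht => (hΓ.hasDerivAt_rcheck ht).continuousAt.continuousWithinAt

/- The space-like curve `r̃` is steeper than the characteristic `ř`, and both end at `(t₀, r₀)`. -/
theorem rt_lt_rcheck (hs : s ∈ Ioo 0 t₀) : rt s < rcheck κ t₀ r₀ s := by
  have hsub : Icc s t₀ ⊆ Ioc 0 t₀ := fun x hx => ⟨hs.1.trans_le hx.1, hx.2⟩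
  have hmono : StrictMonoOn (rt - rcheck κ t₀ r₀) (Icc s t₀) := by
    refine strictMonoOn_of_deriv_pos (convex_Icc s t₀)
      ((hΓ.continuousOn.mono (hsub.trans Ioc_subset_Icc_self)).sub
        (hΓ.continuousOn_rcheck.mono hsub)) fun x hx => ?_
    rw [interior_Icc] at hx
    have hx' : x ∈ Ioc 0 t₀ := hsub (Ioo_subset_Icc_self hx)
    rw [((hΓ.hasDerivAt hx').sub (hΓ.hasDerivAt_rcheck hx')).deriv, sub_pos]
    exact hΓ.lam_lt_deriv x hx'
  have := hmono (left_mem_Icc.2 hs.2.le) (right_mem_Icc.2 hs.2.le) hs.2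
  simp only [Pi.sub_apply, hΓ.apply_t₀, rcheck_self, sub_self] at this
  linarith

theorem continuousOn_sub_rt_rcheck_sub {S : Set ℝ} (hS : S ⊆ Ioc 0 t₀) :
    ContinuousOn (fun q : ℝ × ℝ => (q.2 - rt q.1, rcheck κ t₀ r₀ q.1 - q.2)) (Prod.fst ⁻¹' S) :=
  (continuousOn_snd.sub (hΓ.continuousOn.comp continuousOn_fst
    fun _ hq => Ioc_subset_Icc_self (hS hq))).prodMk
  ((hΓ.continuousOn_rcheck.comp continuousOn_fst fun _ hq => hS hq).sub continuousOn_snd)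

theorem isOpen_openRegion : IsOpen (openRegion κ t₀ r₀ rt) := by
  convert (hΓ.continuousOn_sub_rt_rcheck_sub Ioo_subset_Ioc_self).isOpen_inter_preimage
    (isOpen_Ioo.preimage continuous_fst)
    ((isOpen_Ioi (a := (0 : ℝ))).prod (isOpen_Ioi (a := (0 : ℝ)))) using 1
  ext q
  simp [openRegion, and_assoc]

theorem isCompact_region_slab {a b : ℝ} (ha : 0 < a) (hb : b ≤ t₀) :
    IsCompact {q ∈ region κ t₀ r₀ rt | a ≤ q.1 ∧ q.1 ≤ b} := by
  have hsub : Icc a b ⊆ Ioc 0 t₀ := fun x hx => ⟨ha.trans_le hx.1, hx.2.trans hb⟩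
  obtain ⟨m, hm⟩ :=
    isCompact_Icc.bddBelow_image (hΓ.continuousOn.mono (hsub.trans Ioc_subset_Icc_self))
  obtain ⟨m', hm'⟩ := isCompact_Icc.bddAbove_image (hΓ.continuousOn_rcheck.mono hsub)
  refine ((isCompact_Icc (a := a) (b := b)).prod
    (isCompact_Icc (a := m) (b := m'))).of_isClosed_subset ?_ ?_
  · convert (hΓ.continuousOn_sub_rt_rcheck_sub hsub).preimage_isClosed_of_isClosed
      (isClosed_Icc.preimage continuous_fst)
      ((isClosed_Ici (a := (0 : ℝ))).prod (isClosed_Ici (a := (0 : ℝ)))) using 1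
    ext q
    simp only [region, mem_ofPred_eq, mem_inter_iff, mem_preimage, mem_Icc, mem_prod, mem_Ici,
      sub_nonneg]
    constructor
    · rintro ⟨⟨-, -, h₁, h₂⟩, h₃, h₄⟩
      exact ⟨⟨h₃, h₄⟩, h₁, h₂⟩
    · rintro ⟨⟨h₃, h₄⟩, h₁, h₂⟩
      exact ⟨⟨ha.trans_le h₃, h₄.trans hb, h₁, h₂⟩, h₃, h₄⟩
  · rintro q ⟨⟨-, -, h₁, h₂⟩, h₃, h₄⟩
    exact ⟨⟨h₃, h₄⟩, (hm (mem_image_of_mem _ ⟨h₃, h₄⟩)).trans h₁,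
      h₂.trans (hm' (mem_image_of_mem _ ⟨h₃, h₄⟩))⟩

/- Approach `q` vertically from inside `Ω`; this is where `r̃ < ř` below `t₀` is needed. -/
theorem le_of_forall_openRegion_le {f : ℝ × ℝ → ℝ} {C : ℝ}
    (hf : ContinuousOn f (region κ t₀ r₀ rt)) {q : ℝ × ℝ} (hq : q ∈ region κ t₀ r₀ rt)
    (hq₁ : q.1 < t₀) (hC : ∀ q' ∈ openRegion κ t₀ r₀ rt, q'.1 = q.1 → f q' ≤ C) : f q ≤ C := by
  have hlt := hΓ.rt_lt_rcheck ⟨hq.1, hq₁⟩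
  set c := (rt q.1 + rcheck κ t₀ r₀ q.1) / 2
  set γ : ℝ → ℝ × ℝ := fun τ => (q.1, q.2 + τ * (c - q.2))
  have hmem : ∀ τ ∈ Ioc (0 : ℝ) 1, γ τ ∈ openRegion κ t₀ r₀ rt := fun τ hτ => by
    obtain ⟨h₀, -, h₁, h₂⟩ := hq
    refine ⟨h₀, hq₁, ?_, ?_⟩ <;> dsimp only [γ, c]
    · nlinarith [mul_nonneg (sub_nonneg.2 hτ.2) (sub_nonneg.2 h₁), mul_pos hτ.1 (sub_pos.2 hlt)]
    · nlinarith [mul_nonneg (sub_nonneg.2 hτ.2) (sub_nonneg.2 h₂), mul_pos hτ.1 (sub_pos.2 hlt)]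
  have hγ : Tendsto γ (𝓝[>] 0) (𝓝[region κ t₀ r₀ rt] q) := by
    refine tendsto_nhdsWithin_iff.2 ⟨?_, ?_⟩
    · have : Continuous γ := by fun_prop
      simpa [γ] using this.continuousAt.tendsto.mono_left (nhdsWithin_le_nhds (a := (0 : ℝ)))
    · filter_upwards [Ioc_mem_nhdsGT one_pos] with τ hτ using openRegion_subset_region (hmem τ hτ)
  refine le_of_tendsto ((hf q hq).tendsto.comp hγ) ?_
  filter_upwards [Ioc_mem_nhdsGT one_pos] with τ hτ using hC _ (hmem τ hτ) rfl

theorem hasFDerivAt_of_mem_openRegion {F : ℝ × ℝ → ℝ} (hF : ContDiffOn ℝ 1 F (region κ t₀ r₀ rt))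
    {q : ℝ × ℝ} (hq : q ∈ openRegion κ t₀ r₀ rt) : HasFDerivAt F (fderiv ℝ F q) q :=
  (hF.differentiableOn one_ne_zero q (openRegion_subset_region hq)).differentiableAt
    (mem_of_superset (hΓ.isOpen_openRegion.mem_nhds hq) openRegion_subset_region) |>.hasFDerivAt

end IsSpacelikeBoundary

theorem fderiv_apply_eq_pdt_pdr (F : ℝ × ℝ → ℝ) (q v : ℝ × ℝ) :
    fderiv ℝ F q v = v.1 * pdt F q + v.2 * pdr F q := by
  have hv : v = v.1 • ((1 : ℝ), (0 : ℝ)) + v.2 • ((0 : ℝ), (1 : ℝ)) := by simp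
  conv_lhs => rw [hv]
  rw [map_add, map_smul, map_smul, smul_eq_mul, smul_eq_mul, pdt, pdr]

theorem HasFDerivAt.hasDerivAt_comp_prodMk {F : ℝ × ℝ → ℝ} {γ₁ γ₂ : ℝ → ℝ} {a b s : ℝ}
    (hF : HasFDerivAt F (fderiv ℝ F (γ₁ s, γ₂ s)) (γ₁ s, γ₂ s)) (h₁ : HasDerivAt γ₁ a s)
    (h₂ : HasDerivAt γ₂ b s) :
    HasDerivAt (fun x => F (γ₁ x, γ₂ x))
      (a * pdt F (γ₁ s, γ₂ s) + b * pdr F (γ₁ s, γ₂ s)) s := by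
  have := hF.comp_hasDerivAt s (h₁.prodMk h₂)
  rwa [fderiv_apply_eq_pdt_pdr] at this

noncomputable def coeffA (κ t : ℝ) : ℝ :=
  (κ + 2 - t ^ 2) * t / (2 * ((1 - t ^ 2) * (κ + 1 - t ^ 2)))

noncomputable def coeffB (κ t : ℝ) : ℝ :=
  (κ + 2 - 2 * t ^ 2) * t / ((1 - t ^ 2) * (κ + 1 - t ^ 2))

def CharEq (κ σ : ℝ) (P Q : ℝ × ℝ → ℝ) (D : Set (ℝ × ℝ)) : Prop :=
  ∀ q ∈ D, pdt P q + σ * lam κ q.1 * pdr P q =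
    (P q - Q q) / (2 * q.1) + coeffA κ q.1 * (P q - Q q) - coeffB κ q.1 * P q

theorem Sys38.charEq_left {κ : ℝ} {U V : ℝ × ℝ → ℝ} {D : Set (ℝ × ℝ)} (h : Sys38 κ U V D) :
    CharEq κ 1 U V D := fun q hq => by
  rw [coeffA, coeffB]
  linear_combination (h q hq).1

theorem Sys38.charEq_right {κ : ℝ} {U V : ℝ × ℝ → ℝ} {D : Set (ℝ × ℝ)} (h : Sys38 κ U V D) :
    CharEq κ (-1) V U D := fun q hq => by
  rw [coeffA, coeffB]
  linear_combination (h q hq).2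

section Coefficients

variable {κ t t₀ : ℝ}

theorem kappa_mul_le_mul (hκ : 0 ≤ κ) (ht : t ^ 2 ≤ t₀ ^ 2) :
    κ * (1 - t₀ ^ 2) ≤ (1 - t ^ 2) * (κ + 1 - t ^ 2) := by
  nlinarith [mul_le_mul_of_nonneg_left (by linarith : 1 - t₀ ^ 2 ≤ 1 - t ^ 2) hκ,
    sq_nonneg (1 - t ^ 2)]

theorem abs_coeffA_le (hκ : 0 < κ) (ht : 0 ≤ t) (htt₀ : t ≤ t₀) (ht₀ : t₀ < 1) :
    |coeffA κ t| ≤ (κ + 2) / (κ * (1 - t₀ ^ 2)) * t / 2 := by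
  have ht₀' : 0 < 1 - t₀ ^ 2 := by nlinarith
  have hden := kappa_mul_le_mul hκ.le (pow_le_pow_left₀ ht htt₀ 2)
  have hnum : 0 ≤ (κ + 2 - t ^ 2) * t := mul_nonneg (by nlinarith) ht
  rw [abs_of_nonneg (show 0 ≤ coeffA κ t from div_nonneg hnum (by nlinarith))]
  calc coeffA κ t ≤ (κ + 2) * t / (2 * (κ * (1 - t₀ ^ 2))) :=
        div_le_div₀ (by positivity) (by nlinarith) (by positivity) (by linarith)
    _ = (κ + 2) / (κ * (1 - t₀ ^ 2)) * t / 2 := by field_simp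

theorem abs_coeffB_le (hκ : 0 < κ) (ht : 0 ≤ t) (htt₀ : t ≤ t₀) (ht₀ : t₀ < 1) :
    |coeffB κ t| ≤ (κ + 2) / (κ * (1 - t₀ ^ 2)) * t := by
  have ht₀' : 0 < 1 - t₀ ^ 2 := by nlinarith
  have hden := kappa_mul_le_mul hκ.le (pow_le_pow_left₀ ht htt₀ 2)
  have hnum : 0 ≤ (κ + 2 - 2 * t ^ 2) * t := mul_nonneg (by nlinarith) ht
  rw [abs_of_nonneg (show 0 ≤ coeffB κ t from div_nonneg hnum (by nlinarith))]
  calc coeffB κ t ≤ (κ + 2) * t / (κ * (1 - t₀ ^ 2)) :=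
        div_le_div₀ (by positivity) (by nlinarith) (by positivity) hden
    _ = (κ + 2) / (κ * (1 - t₀ ^ 2)) * t := by field_simp

end Coefficients

def stripDiff (F : ℝ × ℝ → ℝ) (X : ℝ → ℝ) (h s : ℝ) : ℝ := F (s, X s + h) - F (s, X s)

theorem eventually_abs_lt_of_mem_boundaryCurve {κ t₀ r₀ t₁ B : ℝ} {rt : ℝ → ℝ} {f : ℝ × ℝ → ℝ}
    (hf : ContinuousOn f (region κ t₀ r₀ rt ∪ boundaryCurve t₀ rt)) (ht₁ : t₁ ∈ Ioc 0 t₀)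
    (hB : |f (t₁, rt t₁)| < B) (hmem : ∀ᶠ u in 𝓝[>] 0, (t₁, rt t₁ + u) ∈ region κ t₀ r₀ rt) :
    ∀ᶠ u in 𝓝[>] 0, |f (t₁, rt t₁ + u)| < B := by
  have hcurve : Tendsto (fun u : ℝ => (t₁, rt t₁ + u)) (𝓝[>] 0)
      (𝓝[region κ t₀ r₀ rt ∪ boundaryCurve t₀ rt] (t₁, rt t₁)) := by
    refine tendsto_nhdsWithin_iff.2 ⟨?_, hmem.mono fun u hu => Or.inl hu⟩
    have : Continuous fun u : ℝ => (t₁, rt t₁ + u) := by fun_prop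
    simpa using this.continuousAt.tendsto.mono_left (nhdsWithin_le_nhds (a := (0 : ℝ)))
  exact ((hf _ (Or.inr ⟨t₁, ht₁, rfl⟩)).tendsto.comp hcurve).abs.eventually (gt_mem_nhds hB)

namespace IsSpacelikeBoundary

variable {κ σ t₀ r₀ s : ℝ} {rt : ℝ → ℝ} {p : ℝ × ℝ} (hΓ : IsSpacelikeBoundary κ t₀ r₀ rt)
include hΓ

theorem abs_sub_le_of_segment {F : ℝ × ℝ → ℝ} (hF : ContDiffOn ℝ 1 F (region κ t₀ r₀ rt))
    {x h C : ℝ} (hs : 0 < s) (hh : 0 ≤ h)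
    (hseg : ∀ u ∈ Icc 0 h, (s, x + u) ∈ region κ t₀ r₀ rt)
    (hint : ∀ u ∈ Ioo 0 h, (s, x + u) ∈ openRegion κ t₀ r₀ rt)
    (hC : ∀ u ∈ Ioo 0 h, |s * pdr F (s, x + u)| ≤ C) :
    |F (s, x + h) - F (s, x)| ≤ h * C / s := by
  have := abs_sub_le_of_abs_deriv_le (f := fun u => F (s, x + u)) (g := fun u => C / s * u)
    (f' := fun u => pdr F (s, x + u)) (g' := fun _ => C / s) hh
    (hF.continuousOn.comp (by fun_prop) hseg) (by fun_prop)
    (fun u hu => by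
      simpa using (hΓ.hasFDerivAt_of_mem_openRegion hF (hint u hu)).hasDerivAt_comp_prodMk
        (hasDerivAt_const u s) ((hasDerivAt_id' u).const_add x))
    (fun u _ => ((hasDerivAt_id' u).const_mul (C / s)).congr_deriv (mul_one _))
    (fun u hu => by
      have := hC u hu
      rwa [abs_mul, abs_of_pos hs, mul_comm, ← le_div_iff₀ hs] at this)
  simpa [mul_comm h, mul_div_right_comm] using this

theorem hasDerivAt_stripDiff {P Q : ℝ × ℝ → ℝ} {X : ℝ → ℝ} {h : ℝ}
    (hP : ContDiffOn ℝ 1 P (region κ t₀ r₀ rt)) (heq : CharEq κ σ P Q (region κ t₀ r₀ rt))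
    (hX : HasDerivAt X (σ * lam κ s) s) (h₀ : (s, X s) ∈ openRegion κ t₀ r₀ rt)
    (hh : (s, X s + h) ∈ openRegion κ t₀ r₀ rt) :
    HasDerivAt (stripDiff P X h)
      ((stripDiff P X h s - stripDiff Q X h s) / (2 * s) +
        coeffA κ s * (stripDiff P X h s - stripDiff Q X h s) -
        coeffB κ s * stripDiff P X h s) s := by
  have d₁ := (hΓ.hasFDerivAt_of_mem_openRegion hP hh).hasDerivAt_comp_prodMk
    (hasDerivAt_id' s) (hX.add_const h)
  have d₀ := (hΓ.hasFDerivAt_of_mem_openRegion hP h₀).hasDerivAt_comp_prodMk (hasDerivAt_id' s) hX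
  refine (d₁.sub d₀).congr_deriv ?_
  have e₁ := heq _ (openRegion_subset_region hh)
  have e₀ := heq _ (openRegion_subset_region h₀)
  simp only [stripDiff] at e₁ e₀ ⊢
  linear_combination e₁ - e₀

theorem hasDerivAt_charCurve_of_mem (hp : p ∈ openRegion κ t₀ r₀ rt) (hs : s ∈ Ioc 0 t₀) :
    HasDerivAt (charCurve κ σ p) (σ * lam κ s) s :=
  hasDerivAt_charCurve hΓ.kappa_nonneg (hΓ.mem_Ioo_neg_one_one ⟨hp.1, hp.2.1.le⟩)
    (hΓ.mem_Ioo_neg_one_one hs)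

theorem abs_mul_lam_le (hσ : |σ| ≤ 1) (hs : s ∈ Ioc 0 t₀) : |σ * lam κ s| ≤ lam κ s := by
  rw [abs_mul, abs_of_nonneg (hΓ.lam_nonneg hs)]
  exact mul_le_of_le_one_left (hΓ.lam_nonneg hs) hσ

theorem strictAntiOn_charCurve_sub (hσ : |σ| ≤ 1) (hp : p ∈ openRegion κ t₀ r₀ rt) {ε₀ : ℝ}
    (hε₀ : ε₀ ≤ t₀) : StrictAntiOn (charCurve κ σ p - rt) (Icc p.1 ε₀) := by
  have hsub : Icc p.1 ε₀ ⊆ Ioc 0 t₀ := fun x hx => ⟨hp.1.trans_le hx.1, hx.2.trans hε₀⟩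
  refine strictAntiOn_of_deriv_neg (convex_Icc _ _) (ContinuousOn.sub
    (fun x hx => (hΓ.hasDerivAt_charCurve_of_mem hp (hsub hx)).continuousAt.continuousWithinAt)
    (hΓ.continuousOn.mono (hsub.trans Ioc_subset_Icc_self))) fun x hx => ?_
  rw [interior_Icc] at hx
  have hx' := hsub (Ioo_subset_Icc_self hx)
  rw [((hΓ.hasDerivAt_charCurve_of_mem hp hx').sub (hΓ.hasDerivAt hx')).deriv, sub_neg]
  exact (le_abs_self _).trans_lt
    ((hΓ.abs_mul_lam_le hσ hx').trans_lt (hΓ.lam_lt_deriv x hx'))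

theorem monotoneOn_rcheck_sub_charCurve (hσ : |σ| ≤ 1) (hp : p ∈ openRegion κ t₀ r₀ rt)
    {ε₀ : ℝ} (hε₀ : ε₀ ≤ t₀) : MonotoneOn (rcheck κ t₀ r₀ - charCurve κ σ p) (Icc p.1 ε₀) := by
  have hsub : Icc p.1 ε₀ ⊆ Ioc 0 t₀ := fun x hx => ⟨hp.1.trans_le hx.1, hx.2.trans hε₀⟩
  have hderiv : ∀ x ∈ Icc p.1 ε₀, HasDerivAt (rcheck κ t₀ r₀ - charCurve κ σ p)
      (lam κ x - σ * lam κ x) x := fun x hx =>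
    (hΓ.hasDerivAt_rcheck (hsub hx)).sub (hΓ.hasDerivAt_charCurve_of_mem hp (hsub hx))
  refine monotoneOn_of_deriv_nonneg (convex_Icc _ _)
    (fun x hx => (hderiv x hx).continuousAt.continuousWithinAt) ?_ fun x hx => ?_
  · rw [interior_Icc]
    exact fun x hx => (hderiv x (Ioo_subset_Icc_self hx)).differentiableAt.differentiableWithinAt
  · rw [interior_Icc] at hx
    rw [(hderiv x (Ioo_subset_Icc_self hx)).deriv, sub_nonneg]
    exact (le_abs_self _).trans (hΓ.abs_mul_lam_le hσ (hsub (Ioo_subset_Icc_self hx)))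

theorem exists_exit_time (hσ : |σ| ≤ 1) (hp : p ∈ openRegion κ t₀ r₀ rt) {ε₀ : ℝ}
    (hpε : p.1 < ε₀) (hε₀ : ε₀ ≤ t₀) :
    ∃ t₁ ∈ Ioc p.1 ε₀, rt t₁ ≤ charCurve κ σ p t₁ ∧ (t₁ = ε₀ ∨ charCurve κ σ p t₁ = rt t₁) := by
  have hG := hΓ.strictAntiOn_charCurve_sub hσ hp hε₀
  have hGp : 0 < (charCurve κ σ p - rt) p.1 := by simpa using hp.2.2.1
  by_cases hε : 0 < (charCurve κ σ p - rt) ε₀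
  · exact ⟨ε₀, ⟨hpε, le_rfl⟩, by simpa using hε.le, Or.inl rfl⟩
  have hsub : Icc p.1 ε₀ ⊆ Ioc 0 t₀ := fun x hx => ⟨hp.1.trans_le hx.1, hx.2.trans hε₀⟩
  have hcont : ContinuousOn (charCurve κ σ p - rt) (Icc p.1 ε₀) := ContinuousOn.sub
    (fun x hx => (hΓ.hasDerivAt_charCurve_of_mem hp (hsub hx)).continuousAt.continuousWithinAt)
    (hΓ.continuousOn.mono (hsub.trans Ioc_subset_Icc_self))
  obtain ⟨t₁, ht₁, hzero⟩ :=
    intermediate_value_Icc' hpε.le hcont ⟨not_lt.1 hε, hGp.le⟩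
  have hne : t₁ ≠ p.1 := by rintro rfl; exact hGp.ne' hzero
  rw [Pi.sub_apply, sub_eq_zero] at hzero
  exact ⟨t₁, ⟨lt_of_le_of_ne ht₁.1 hne.symm, ht₁.2⟩, hzero.ge, Or.inr hzero⟩

/- `d` is half the initial distance from `p` to `ř`: along the characteristic `r̃ - X` decreases
and `ř - X` increases. -/
theorem exists_exit (hσ : |σ| ≤ 1) (hp : p ∈ openRegion κ t₀ r₀ rt) {ε₀ : ℝ}
    (hpε : p.1 < ε₀) (hε₀ : ε₀ ≤ t₀) :
    ∃ t₁ ∈ Ioc p.1 ε₀, ∃ d > 0, (t₁ = ε₀ ∨ charCurve κ σ p t₁ = rt t₁) ∧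
      ∀ s ∈ Icc p.1 t₁, ∀ u ∈ Icc 0 d, (s, charCurve κ σ p s + u) ∈ region κ t₀ r₀ rt ∧
        (s < t₁ ∨ 0 < u → (s, charCurve κ σ p s + u) ∈ openRegion κ t₀ r₀ rt) := by
  obtain ⟨t₁, ht₁, hGt₁, hcase⟩ := hΓ.exists_exit_time hσ hp hpε hε₀
  have hG := hΓ.strictAntiOn_charCurve_sub hσ hp hε₀
  have hDlow : ∀ s ∈ Icc p.1 ε₀,
      rcheck κ t₀ r₀ p.1 - p.2 ≤ rcheck κ t₀ r₀ s - charCurve κ σ p s := fun s hs => by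
    simpa using hΓ.monotoneOn_rcheck_sub_charCurve hσ hp hε₀ (left_mem_Icc.2 hpε.le) hs hs.1
  have ht₁mem : t₁ ∈ Icc p.1 ε₀ := Ioc_subset_Icc_self ht₁
  have ht₁t₀ : t₁ < t₀ := by
    refine lt_of_le_of_ne (ht₁.2.trans hε₀) fun h => ?_
    have := hDlow t₁ ht₁mem
    rw [h, rcheck_self] at this
    rw [h, hΓ.apply_t₀] at hGt₁
    linarith [hp.2.2.2]
  refine ⟨t₁, ht₁, (rcheck κ t₀ r₀ p.1 - p.2) / 2, by linarith [hp.2.2.2], hcase,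
    fun s hs u hu => ?_⟩
  have hsε : s ∈ Icc p.1 ε₀ := ⟨hs.1, hs.2.trans ht₁.2⟩
  have hGs : (charCurve κ σ p - rt) t₁ ≤ (charCurve κ σ p - rt) s :=
    hG.antitoneOn hsε ht₁mem hs.2
  have hDs := hDlow s hsε
  have hs0 : 0 < s := hp.1.trans_le hs.1
  have hst₀ : s < t₀ := hs.2.trans_lt ht₁t₀
  simp only [Pi.sub_apply] at hGs
  refine ⟨⟨hs0, hst₀.le, ?_, ?_⟩, fun hsu => ⟨hs0, hst₀, ?_, ?_⟩⟩ <;> dsimp only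
  · linarith [hu.1]
  · linarith [hu.2, hp.2.2.2]
  · rcases hsu with hlt | hu0
    · have := hG hsε ht₁mem hlt
      simp only [Pi.sub_apply] at this
      linarith [hu.1]
    · linarith
  · linarith [hu.2, hp.2.2.2]

theorem eventually_abs_sub_le {P : ℝ × ℝ → ℝ} (hP : ContDiffOn ℝ 1 P (region κ t₀ r₀ rt))
    {t₁ x d B : ℝ} (ht₁ : 0 < t₁) (hd : 0 < d)
    (hseg : ∀ u ∈ Icc 0 d, (t₁, x + u) ∈ region κ t₀ r₀ rt)
    (hint : ∀ u ∈ Ioc 0 d, (t₁, x + u) ∈ openRegion κ t₀ r₀ rt)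
    (hB : ∀ᶠ u in 𝓝[>] 0, |t₁ * pdr P (t₁, x + u)| ≤ B) :
    ∀ᶠ h in 𝓝[>] 0, |P (t₁, x + h) - P (t₁, x)| ≤ h * B / t₁ := by
  obtain ⟨ε, hε, hεB⟩ := mem_nhdsGT_iff_exists_Ioo_subset.1 hB
  filter_upwards [Ioo_mem_nhdsGT (lt_min hd hε)] with h hh
  have hhd : h ≤ d := hh.2.le.trans (min_le_left _ _)
  exact hΓ.abs_sub_le_of_segment hP ht₁ hh.1.le (fun u hu => hseg u ⟨hu.1, hu.2.trans hhd⟩)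
    (fun u hu => hint u ⟨hu.1, hu.2.le.trans hhd⟩)
    (fun u hu => hεB ⟨hu.1, hu.2.trans (hh.2.trans_le (min_le_right _ _))⟩)

theorem eventually_abs_stripDiff_le {P : ℝ × ℝ → ℝ} {X : ℝ → ℝ}
    (hP : ContDiffOn ℝ 1 P (region κ t₀ r₀ rt))
    (hRP : ContinuousOn (fun q : ℝ × ℝ => q.1 * pdr P q) (region κ t₀ r₀ rt ∪ boundaryCurve t₀ rt))
    {t₁ d ε₀ B : ℝ} (ht₁ : t₁ ∈ Ioc 0 t₀) (hd : 0 < d)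
    (hseg : ∀ u ∈ Icc 0 d, (t₁, X t₁ + u) ∈ region κ t₀ r₀ rt ∧
      (0 < u → (t₁, X t₁ + u) ∈ openRegion κ t₀ r₀ rt))
    (hexit : t₁ = ε₀ ∨ X t₁ = rt t₁)
    (htop : ∀ q ∈ region κ t₀ r₀ rt, q.1 = ε₀ → |q.1 * pdr P q| ≤ B)
    (hbdry : ∀ t ∈ Ioc 0 t₀, |t * pdr P (t, rt t)| < B) :
    ∀ᶠ h in 𝓝[>] 0, |stripDiff P X h t₁| ≤ h * B / t₁ := by
  refine hΓ.eventually_abs_sub_le hP ht₁.1 hd (fun u hu => (hseg u hu).1)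
    (fun u hu => (hseg u (Ioc_subset_Icc_self hu)).2 hu.1) ?_
  rcases hexit with rfl | hXt₁
  · filter_upwards [Ioc_mem_nhdsGT hd] with u hu
    exact htop _ (hseg u (Ioc_subset_Icc_self hu)).1 rfl
  · have hmem : ∀ᶠ u in 𝓝[>] 0, (t₁, rt t₁ + u) ∈ region κ t₀ r₀ rt := by
      filter_upwards [Ioc_mem_nhdsGT hd] with u hu
      simpa [hXt₁] using (hseg u (Ioc_subset_Icc_self hu)).1
    rw [hXt₁]
    filter_upwards [eventually_abs_lt_of_mem_boundaryCurve hRP ht₁ (hbdry t₁ ht₁) hmem]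
      with u hu using hu.le

end IsSpacelikeBoundary

namespace IsSpacelikeBoundary

variable {κ σ t₀ r₀ : ℝ} {rt : ℝ → ℝ} {p : ℝ × ℝ} (hΓ : IsSpacelikeBoundary κ t₀ r₀ rt)
include hΓ

theorem mul_abs_stripDiff_le {P Q : ℝ × ℝ → ℝ} {X : ℝ → ℝ}
    (hP : ContDiffOn ℝ 1 P (region κ t₀ r₀ rt)) (hQ : ContDiffOn ℝ 1 Q (region κ t₀ r₀ rt))
    (heq : CharEq κ σ P Q (region κ t₀ r₀ rt)) {a b h k M B : ℝ} (ha : 0 < a) (hab : a ≤ b)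
    (hh : 0 < h) (hk : 0 ≤ k) (hM : 0 ≤ M) (hX : ∀ s ∈ Icc a b, HasDerivAt X (σ * lam κ s) s)
    (hseg : ∀ s ∈ Icc a b, ∀ u ∈ Icc 0 h, (s, X s + u) ∈ region κ t₀ r₀ rt)
    (hint : ∀ s ∈ Ioo a b, ∀ u ∈ Icc 0 h, (s, X s + u) ∈ openRegion κ t₀ r₀ rt)
    (hA : ∀ s ∈ Ioo a b, |coeffA κ s| ≤ k * s / 2) (hB : ∀ s ∈ Ioo a b, |coeffB κ s| ≤ k * s)
    (hPM : ∀ s ∈ Ioo a b, ∀ u ∈ Ioo 0 h, |s * pdr P (s, X s + u)| ≤ M)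
    (hQM : ∀ s ∈ Ioo a b, ∀ u ∈ Ioo 0 h, |s * pdr Q (s, X s + u)| ≤ M)
    (hexit : |stripDiff P X h b| ≤ h * B / b) :
    a * |stripDiff P X h a| ≤ h * (max B (M / 3) + 4 * k * b ^ 2 * M) := by
  have hXc : ContinuousOn X (Icc a b) := fun s hs => (hX s hs).continuousAt.continuousWithinAt
  have hcont : ∀ u ∈ Icc 0 h, ContinuousOn (fun s => P (s, X s + u)) (Icc a b) := fun u hu =>
    hP.continuousOn.comp (continuousOn_id.prodMk (hXc.add continuousOn_const))
      fun s hs => hseg s hs u hu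
  have hbound : ∀ F : ℝ × ℝ → ℝ, ContDiffOn ℝ 1 F (region κ t₀ r₀ rt) →
      (∀ s ∈ Ioo a b, ∀ u ∈ Ioo 0 h, |s * pdr F (s, X s + u)| ≤ M) →
      ∀ s ∈ Ioo a b, |stripDiff F X h s| ≤ h * M / s := fun F hF hFM s hs =>
    hΓ.abs_sub_le_of_segment hF (ha.trans hs.1) hh.le
      (fun u hu => hseg s (Ioo_subset_Icc_self hs) u hu)
      (fun u hu => hint s hs u (Ioo_subset_Icc_self hu)) (hFM s hs)
  have hode := mul_abs_le_of_hasDerivAt ha hab hk (mul_nonneg hh.le hM)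
    ((hcont h ⟨hh.le, le_rfl⟩).sub (by simpa using hcont 0 ⟨le_rfl, hh.le⟩))
    (fun s hs => hΓ.hasDerivAt_stripDiff hP heq (hX s (Ioo_subset_Icc_self hs))
      (by simpa using hint s hs 0 ⟨le_rfl, hh.le⟩) (hint s hs h ⟨hh.le, le_rfl⟩))
    (hbound P hP hPM) (hbound Q hQ hQM) hA hB
  have hb : b * |stripDiff P X h b| ≤ h * B := by
    rwa [le_div_iff₀ (ha.trans_le hab), mul_comm] at hexit
  calc a * |stripDiff P X h a|
      ≤ max (b * |stripDiff P X h b|) (h * M / 3) + 4 * k * b ^ 2 * (h * M) := hode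
    _ ≤ max (h * B) (h * (M / 3)) + 4 * k * b ^ 2 * (h * M) := by
      rw [mul_div_assoc]
      gcongr
    _ = h * (max B (M / 3) + 4 * k * b ^ 2 * M) := by
      rw [← mul_max_of_nonneg _ _ hh.le]
      ring

theorem abs_mul_pdr_le (hσ : |σ| ≤ 1) {P Q : ℝ × ℝ → ℝ}
    (hP : ContDiffOn ℝ 1 P (region κ t₀ r₀ rt)) (hQ : ContDiffOn ℝ 1 Q (region κ t₀ r₀ rt))
    (heq : CharEq κ σ P Q (region κ t₀ r₀ rt))
    (hRP : ContinuousOn (fun q : ℝ × ℝ => q.1 * pdr P q) (region κ t₀ r₀ rt ∪ boundaryCurve t₀ rt))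
    {ε₀ k M B : ℝ} (hε₀ : ε₀ ≤ t₀) (hk : 0 ≤ k)
    (hA : ∀ s ∈ Ioc 0 t₀, |coeffA κ s| ≤ k * s / 2) (hB : ∀ s ∈ Ioc 0 t₀, |coeffB κ s| ≤ k * s)
    (hp : p ∈ openRegion κ t₀ r₀ rt) (hpε : p.1 < ε₀)
    (hPM : ∀ q ∈ region κ t₀ r₀ rt, p.1 ≤ q.1 → q.1 ≤ ε₀ → |q.1 * pdr P q| ≤ M)
    (hQM : ∀ q ∈ region κ t₀ r₀ rt, p.1 ≤ q.1 → q.1 ≤ ε₀ → |q.1 * pdr Q q| ≤ M)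
    (htop : ∀ q ∈ region κ t₀ r₀ rt, q.1 = ε₀ → |q.1 * pdr P q| ≤ B)
    (hbdry : ∀ t ∈ Ioc 0 t₀, |t * pdr P (t, rt t)| < B) :
    |p.1 * pdr P p| ≤ max B (M / 3) + 4 * k * ε₀ ^ 2 * M := by
  obtain ⟨t₁, ht₁, d, hd, hcase, hstrip⟩ := hΓ.exists_exit hσ hp hpε hε₀
  set X := charCurve κ σ p
  have ht₁mem : t₁ ∈ Icc p.1 t₁ := right_mem_Icc.2 ht₁.1.le
  have hexit := hΓ.eventually_abs_stripDiff_le (X := X) hP hRP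
    ⟨hp.1.trans ht₁.1, ht₁.2.trans hε₀⟩ hd
    (fun u hu => ⟨(hstrip t₁ ht₁mem u hu).1, fun hu0 => (hstrip t₁ ht₁mem u hu).2 (Or.inr hu0)⟩)
    hcase htop hbdry
  have hM : 0 ≤ M := (abs_nonneg _).trans (hPM p (openRegion_subset_region hp) le_rfl hpε.le)
  have hdiff : ∀ᶠ h in 𝓝[>] 0, |P (p.1, p.2 + h) - P (p.1, p.2 + 0)| ≤
      h * ((max B (M / 3) + 4 * k * ε₀ ^ 2 * M) / p.1) := by
    filter_upwards [hexit, Ioc_mem_nhdsGT hd] with h hexit_h hh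
    have hsub : ∀ s ∈ Icc p.1 t₁, s ∈ Ioc 0 t₀ :=
      fun s hs => ⟨hp.1.trans_le hs.1, hs.2.trans (ht₁.2.trans hε₀)⟩
    have hstrip_h : ∀ s ∈ Icc p.1 t₁, ∀ u ∈ Icc 0 h, _ := fun s hs u hu =>
      hstrip s hs u ⟨hu.1, hu.2.trans hh.2⟩
    have key := hΓ.mul_abs_stripDiff_le hP hQ heq hp.1 ht₁.1.le hh.1 hk hM
      (fun s hs => hΓ.hasDerivAt_charCurve_of_mem hp (hsub s hs))
      (fun s hs u hu => (hstrip_h s hs u hu).1)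
      (fun s hs u hu => (hstrip_h s (Ioo_subset_Icc_self hs) u hu).2 (Or.inl hs.2))
      (fun s hs => hA s (hsub s (Ioo_subset_Icc_self hs)))
      (fun s hs => hB s (hsub s (Ioo_subset_Icc_self hs)))
      (fun s hs u hu => hPM _ (hstrip_h s (Ioo_subset_Icc_self hs) u (Ioo_subset_Icc_self hu)).1
        hs.1.le (hs.2.le.trans ht₁.2))
      (fun s hs u hu => hQM _ (hstrip_h s (Ioo_subset_Icc_self hs) u (Ioo_subset_Icc_self hu)).1
        hs.1.le (hs.2.le.trans ht₁.2)) hexit_h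
    have ht₁ε : t₁ ^ 2 ≤ ε₀ ^ 2 := pow_le_pow_left₀ (hp.1.trans ht₁.1).le ht₁.2 2
    rw [mul_div_assoc', le_div_iff₀ hp.1, mul_comm, add_zero]
    simp only [stripDiff, charCurve_fst] at key
    refine key.trans (mul_le_mul_of_nonneg_left ?_ hh.1.le)
    gcongr
  have hderiv : HasDerivAt (fun u => P (p.1, p.2 + u)) (pdr P p) 0 := by
    simpa using (hΓ.hasFDerivAt_of_mem_openRegion hP (by simpa using hp)).hasDerivAt_comp_prodMk
      (hasDerivAt_const (0 : ℝ) p.1) ((hasDerivAt_id' (0 : ℝ)).const_add p.2)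
  have := abs_le_of_hasDerivAt_of_eventually_le hderiv hdiff
  rwa [abs_mul, abs_of_pos hp.1, mul_comm, ← le_div_iff₀ hp.1]

end IsSpacelikeBoundary

namespace IsSpacelikeBoundary

variable {κ t₀ r₀ : ℝ} {rt : ℝ → ℝ} {U V : ℝ × ℝ → ℝ} {p : ℝ × ℝ}
  (hΓ : IsSpacelikeBoundary κ t₀ r₀ rt)
include hΓ

theorem max_abs_mul_pdr_le (hU : ContDiffOn ℝ 1 U (region κ t₀ r₀ rt))
    (hV : ContDiffOn ℝ 1 V (region κ t₀ r₀ rt)) (hsys : Sys38 κ U V (region κ t₀ r₀ rt))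
    (hRU : ContinuousOn (fun q : ℝ × ℝ => q.1 * pdr U q) (region κ t₀ r₀ rt ∪ boundaryCurve t₀ rt))
    (hRV : ContinuousOn (fun q : ℝ × ℝ => q.1 * pdr V q) (region κ t₀ r₀ rt ∪ boundaryCurve t₀ rt))
    {ε₀ k M B : ℝ} (hε₀ : ε₀ ≤ t₀) (hk : 0 ≤ k)
    (hA : ∀ s ∈ Ioc 0 t₀, |coeffA κ s| ≤ k * s / 2) (hB : ∀ s ∈ Ioc 0 t₀, |coeffB κ s| ≤ k * s)
    (hp : p ∈ openRegion κ t₀ r₀ rt) (hpε : p.1 < ε₀)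
    (hM : ∀ q ∈ region κ t₀ r₀ rt, p.1 ≤ q.1 → q.1 ≤ ε₀ →
      max |q.1 * pdr U q| |q.1 * pdr V q| ≤ M)
    (htop : ∀ q ∈ region κ t₀ r₀ rt, q.1 = ε₀ → max |q.1 * pdr U q| |q.1 * pdr V q| ≤ B)
    (hbdry : ∀ t ∈ Ioc 0 t₀, max |t * pdr U (t, rt t)| |t * pdr V (t, rt t)| < B) :
    max |p.1 * pdr U p| |p.1 * pdr V p| ≤ max B (M / 3) + 4 * k * ε₀ ^ 2 * M :=
  max_le
    (hΓ.abs_mul_pdr_le (by norm_num) hU hV hsys.charEq_left hRU hε₀ hk hA hB hp hpε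
      (fun q hq h₁ h₂ => (le_max_left _ _).trans (hM q hq h₁ h₂))
      (fun q hq h₁ h₂ => (le_max_right _ _).trans (hM q hq h₁ h₂))
      (fun q hq h => (le_max_left _ _).trans (htop q hq h))
      (fun t ht => (le_max_left _ _).trans_lt (hbdry t ht)))
    (hΓ.abs_mul_pdr_le (by norm_num) hV hU hsys.charEq_right hRV hε₀ hk hA hB hp hpε
      (fun q hq h₁ h₂ => (le_max_right _ _).trans (hM q hq h₁ h₂))
      (fun q hq h₁ h₂ => (le_max_left _ _).trans (hM q hq h₁ h₂))
      (fun q hq h => (le_max_right _ _).trans (htop q hq h))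
      (fun t ht => (le_max_right _ _).trans_lt (hbdry t ht)))

/- If the supremum `M` of `max(|R|, |S|)` over `Ω ∩ {p.1 ≤ t ≤ ε₀}` were at least `1 + 2B`, the
boundary data would be below `M / 2`, and `max_abs_mul_pdr_le` would give `M ≤ 3M/4`. -/
theorem max_abs_mul_pdr_lt (hU : ContDiffOn ℝ 1 U (region κ t₀ r₀ rt))
    (hV : ContDiffOn ℝ 1 V (region κ t₀ r₀ rt)) (hsys : Sys38 κ U V (region κ t₀ r₀ rt))
    (hRU : ContinuousOn (fun q : ℝ × ℝ => q.1 * pdr U q) (region κ t₀ r₀ rt ∪ boundaryCurve t₀ rt))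
    (hRV : ContinuousOn (fun q : ℝ × ℝ => q.1 * pdr V q) (region κ t₀ r₀ rt ∪ boundaryCurve t₀ rt))
    {ε₀ k B : ℝ} (hε₀ : ε₀ ≤ t₀) (hk : 0 ≤ k) (hsmall : 4 * k * ε₀ ^ 2 ≤ 1 / 4)
    (hA : ∀ s ∈ Ioc 0 t₀, |coeffA κ s| ≤ k * s / 2) (hB : ∀ s ∈ Ioc 0 t₀, |coeffB κ s| ≤ k * s)
    (htop : ∀ q ∈ region κ t₀ r₀ rt, q.1 = ε₀ → max |q.1 * pdr U q| |q.1 * pdr V q| ≤ B)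
    (hbdry : ∀ t ∈ Ioc 0 t₀, max |t * pdr U (t, rt t)| |t * pdr V (t, rt t)| ≤ B)
    (hp : p ∈ region κ t₀ r₀ rt) (hpε : p.1 ≤ ε₀) :
    max |p.1 * pdr U p| |p.1 * pdr V p| < 1 + 2 * B := by
  set f : ℝ × ℝ → ℝ := fun q => max |q.1 * pdr U q| |q.1 * pdr V q|
  set K := {q ∈ region κ t₀ r₀ rt | p.1 ≤ q.1 ∧ q.1 ≤ ε₀}
  have hf : ContinuousOn f (region κ t₀ r₀ rt) :=
    (hRU.abs.sup hRV.abs).mono subset_union_left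
  have hbdd : BddAbove (f '' K) :=
    (hΓ.isCompact_region_slab hp.1 hε₀).bddAbove_image (hf.mono fun q hq => hq.1)
  have hfM : ∀ q ∈ K, f q ≤ sSup (f '' K) := fun q hq => le_csSup hbdd (mem_image_of_mem f hq)
  set M := sSup (f '' K)
  refine (hfM p ⟨hp, le_rfl, hpε⟩).trans_lt (lt_of_not_ge fun hMB => ?_)
  have hB0 : 0 ≤ B := (abs_nonneg _).trans ((le_max_left _ _).trans
    (hbdry t₀ ⟨hΓ.t₀_mem.1, le_rfl⟩))
  have hK : ∀ q ∈ K, f q ≤ 3 / 4 * M := by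
    rintro q ⟨hq, hpq, hqε⟩
    rcases hqε.eq_or_lt with hqε | hqε
    · linarith [htop q hq hqε]
    refine hΓ.le_of_forall_openRegion_le hf hq (hqε.trans_le hε₀) fun q' hq' hq'₁ => ?_
    have := hΓ.max_abs_mul_pdr_le hU hV hsys hRU hRV hε₀ hk hA hB hq' (hq'₁ ▸ hqε)
      (fun q'' hq'' h₁ h₂ => hfM q'' ⟨hq'', hpq.trans (hq'₁ ▸ h₁), h₂⟩)
      (fun q'' hq'' h => (htop q'' hq'' h).trans_lt (by linarith : B < M / 2) |>.le)
      (fun t ht => (hbdry t ht).trans_lt (by linarith : B < M / 2))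
    have hM0 : 0 ≤ M := by linarith
    calc f q' ≤ max (M / 2) (M / 3) + 4 * k * ε₀ ^ 2 * M := this
      _ ≤ M / 2 + 1 / 4 * M := by
        gcongr
        · exact max_le le_rfl (by linarith)
      _ = 3 / 4 * M := by ring
  have : M ≤ 3 / 4 * M := csSup_le ⟨f p, mem_image_of_mem f ⟨hp, le_rfl, hpε⟩⟩
    (forall_mem_image.2 hK)
  linarith

end IsSpacelikeBoundary

theorem four_mul_mul_sq_le {k ε : ℝ} (hk : 1 ≤ k) (hε0 : 0 ≤ ε) (hε : ε ≤ 1 / (4 * k)) :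
    4 * k * ε ^ 2 ≤ 1 / 4 := by
  have h₁ : 4 * k * ε ≤ 1 := by rwa [le_div_iff₀ (by positivity), mul_comm] at hε
  have h₂ : ε ≤ 1 / 4 := hε.trans (one_div_le_one_div_of_le (by norm_num) (by linarith))
  nlinarith

theorem stmt_5_general (κ t₀ r₀ : ℝ) (hκ : 0 < κ) (ht₀ : t₀ ∈ Set.Ioo (0:ℝ) 1)
    (rt : ℝ → ℝ)
    (hrtC1 : ContDiffOn ℝ 1 rt (Set.Icc 0 t₀))
    (hrtt0 : rt t₀ = r₀)
    (hspace : ∀ t ∈ Set.Ioc (0:ℝ) t₀, lam κ t < deriv rt t)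
    (Ub Vb : ℝ × ℝ → ℝ)
    (hUC1 : ContDiffOn ℝ 1 Ub (region κ t₀ r₀ rt))
    (hVC1 : ContDiffOn ℝ 1 Vb (region κ t₀ r₀ rt))
    (hsys : Sys38 κ Ub Vb (region κ t₀ r₀ rt))
    (R S : ℝ × ℝ → ℝ)
    (hR : ∀ p, R p = p.1 * pdr Ub p) (hS : ∀ p, S p = p.1 * pdr Vb p)
    (hRcont : ContinuousOn R (region κ t₀ r₀ rt ∪
      {p : ℝ × ℝ | ∃ t ∈ Set.Ioc (0:ℝ) t₀, p = (t, rt t)}))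
    (hScont : ContinuousOn S (region κ t₀ r₀ rt ∪
      {p : ℝ × ℝ | ∃ t ∈ Set.Ioc (0:ℝ) t₀, p = (t, rt t)}))
    (k₀ ε₀ Mb : ℝ)
    (hk₀ : k₀ = (κ + 2)/(κ * (1 - t₀^2)))
    (hε₀ : ε₀ = min t₀ (1/(4*k₀)))
    (hbdd₂ : BddAbove {x : ℝ | ∃ p ∈ region κ t₀ r₀ rt, ε₀ ≤ p.1 ∧ x = max |R p| |S p|})
    (hbddΓ : BddAbove {x : ℝ | ∃ t ∈ Set.Ioc (0:ℝ) t₀, x = max |R (t, rt t)| |S (t, rt t)|})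
    (hMb : Mb = 1 + 2 * max
      (sSup {x : ℝ | ∃ p ∈ region κ t₀ r₀ rt, ε₀ ≤ p.1 ∧ x = max |R p| |S p|})
      (sSup {x : ℝ | ∃ t ∈ Set.Ioc (0:ℝ) t₀, x = max |R (t, rt t)| |S (t, rt t)|})) :
    ∀ p ∈ region κ t₀ r₀ rt, p.1 ≤ ε₀ → |R p| < Mb ∧ |S p| < Mb := by
  intro p hp hpε
  obtain rfl : R = fun q => q.1 * pdr Ub q := funext hR
  obtain rfl : S = fun q => q.1 * pdr Vb q := funext hS
  have hΓ : IsSpacelikeBoundary κ t₀ r₀ rt := ⟨hκ.le, ht₀, hrtC1.continuousOn, hrtt0, hspace⟩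
  have ht₀' : 0 < 1 - t₀ ^ 2 := by nlinarith [ht₀.1, ht₀.2]
  have hk₀1 : 1 ≤ k₀ := by
    rw [hk₀, le_div_iff₀ (by positivity)]
    nlinarith
  have hε₀t₀ : ε₀ ≤ t₀ := hε₀ ▸ min_le_left _ _
  have hsmall : 4 * k₀ * ε₀ ^ 2 ≤ 1 / 4 := four_mul_mul_sq_le hk₀1
    (hε₀ ▸ le_min ht₀.1.le (by positivity)) (hε₀ ▸ min_le_right _ _)
  refine max_lt_iff.1 (hMb ▸ hΓ.max_abs_mul_pdr_lt hUC1 hVC1 hsys hRcont hScont hε₀t₀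
    (by positivity) hsmall (fun s hs => hk₀ ▸ abs_coeffA_le hκ hs.1.le hs.2 ht₀.2)
    (fun s hs => hk₀ ▸ abs_coeffB_le hκ hs.1.le hs.2 ht₀.2)
    (fun q hq h => (le_csSup hbdd₂ ⟨q, hq, h.ge, rfl⟩).trans (le_max_left _ _))
    (fun t ht => (le_csSup hbddΓ ⟨t, ht, rfl⟩).trans (le_max_right _ _)) hp hpε)

/-- Lemma 3.3 (bounds on the scaled r-derivatives). -/
theorem stmt_5 (κ t₀ r₀ : ℝ) (hκ : 0 < κ) (ht₀ : t₀ ∈ Set.Ioo (0:ℝ) 1)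
    (hr₀ : 0 < r₀) (rt : ℝ → ℝ)
    (hrtC1 : ContDiffOn ℝ 1 rt (Set.Icc 0 t₀))
    (hrtmono : StrictMonoOn rt (Set.Icc 0 t₀))
    (hrt0 : rt 0 = 0) (hrtt0 : rt t₀ = r₀)
    (hspace : ∀ t ∈ Set.Ioc (0:ℝ) t₀, lam κ t < deriv rt t)
    (Ub Vb : ℝ × ℝ → ℝ)
    (hUC1 : ContDiffOn ℝ 1 Ub (region κ t₀ r₀ rt))
    (hVC1 : ContDiffOn ℝ 1 Vb (region κ t₀ r₀ rt))
    (hsys : Sys38 κ Ub Vb (region κ t₀ r₀ rt))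
    (R S : ℝ × ℝ → ℝ)
    (hR : ∀ p, R p = p.1 * pdr Ub p) (hS : ∀ p, S p = p.1 * pdr Vb p)
    (hRcont : ContinuousOn R (region κ t₀ r₀ rt ∪
      {p : ℝ × ℝ | ∃ t ∈ Set.Ioc (0:ℝ) t₀, p = (t, rt t)}))
    (hScont : ContinuousOn S (region κ t₀ r₀ rt ∪
      {p : ℝ × ℝ | ∃ t ∈ Set.Ioc (0:ℝ) t₀, p = (t, rt t)}))
    (k₀ ε₀ Mb : ℝ)
    (hk₀ : k₀ = (κ + 2)/(κ * (1 - t₀^2)))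
    (hε₀ : ε₀ = min t₀ (1/(4*k₀)))
    (hbdd₂ : BddAbove {x : ℝ | ∃ p ∈ region κ t₀ r₀ rt, ε₀ ≤ p.1 ∧ x = max |R p| |S p|})
    (hbddΓ : BddAbove {x : ℝ | ∃ t ∈ Set.Ioc (0:ℝ) t₀, x = max |R (t, rt t)| |S (t, rt t)|})
    (hMb : Mb = 1 + 2 * max
      (sSup {x : ℝ | ∃ p ∈ region κ t₀ r₀ rt, ε₀ ≤ p.1 ∧ x = max |R p| |S p|})
      (sSup {x : ℝ | ∃ t ∈ Set.Ioc (0:ℝ) t₀, x = max |R (t, rt t)| |S (t, rt t)|})) :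
    ∀ p ∈ region κ t₀ r₀ rt, p.1 ≤ ε₀ → |R p| < Mb ∧ |S p| < Mb :=
  stmt_5_general κ t₀ r₀ hκ ht₀ rt hrtC1 hrtt0 hspace Ub Vb hUC1 hVC1 hsys R S hR hS hRcont hScont
    k₀ ε₀ Mb hk₀ hε₀ hbdd₂ hbddΓ hMb
end

section
/- Lemma 3.4 (uniform boundedness of the singular quotient). Let (Ū, V̄) be a C¹ solution of system (3.8) on Ω which extends continuously to the boundary curve Γ = {(t, r̃(t)) : 0 < t ≤ t₀}. Assume there are constants C₁, C₂, C₃ such that |Ū| ≤ C₁ and |V̄| ≤ C₁ on Ω, |t·∂_r V̄| ≤ C₂ on Ω, and |(Ū − V̄)/t| ≤ C₃ on Γ. Then the function W̄ := (Ū − V̄)/t is uniformly bounded on Ω, i.e. there is a constant C (depending only on κ, t₀, C₁, C₂, C₃) such that |Ū(t,r) − V̄(t,r)| ≤ C·t for all (t,r) ∈ Ω. -/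
/-!
Along a positive characteristic `dr/dt = λ(t)` the singular terms `±(Ū − V̄)/(2t)` of (3.8)
cancel against the derivative of `1/t`, so that `W̄ = (Ū − V̄)/t` satisfies
`dW̄/dt = t²/F(t) · (Ū − V̄) − 2√(1 − t²)/F(t) · t ∂ᵣV̄`, which is bounded in terms of `C₁`
and `C₂`. Followed forward in time from a point of `Ω`, the characteristic stays below `ř`
(a characteristic of the same family) and leaves `Ω` either through `Γ`, where `|W̄| ≤ C₃`, or at `t = t₀`, where
`|W̄| ≤ 2C₁/t₀`. The mean value inequality transports this bound back to the starting point, and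
continuity extends it to the boundary of `Ω`.
-/

open Set Topology

noncomputable def F (κ t : ℝ) : ℝ := (1 - t ^ 2) * (κ + 1 - t ^ 2)

lemma F_pos {κ t : ℝ} (hκ : 0 ≤ κ) (ht : t ^ 2 < 1) : 0 < F κ t :=
  mul_pos (by linarith) (by linarith)

lemma F_le_F_of_sq_le {κ s t : ℝ} (hκ : 0 ≤ κ) (hst : s ^ 2 ≤ t ^ 2) (ht : t ^ 2 < 1) :
    F κ t ≤ F κ s := by
  unfold F
  nlinarith

lemma lam_eq (κ t : ℝ) : lam κ t = √(1 - t ^ 2) * t ^ 2 / F κ t := rfl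

lemma continuousOn_lam {κ : ℝ} (hκ : 0 ≤ κ) : ContinuousOn (lam κ) (Ioo (-1) 1) := by
  refine ContinuousOn.div (by fun_prop) (by fun_prop) fun t ht => (F_pos hκ ?_).ne'
  rw [sq_lt_one_iff_abs_lt_one, abs_lt]
  exact ht

lemma hasDerivAt_rcheck {κ t₀ r₀ u : ℝ} (hκ : 0 ≤ κ) (ht₀ : t₀ ∈ Ioo (-1) 1)
    (hu : u ∈ Ioo (-1) 1) : HasDerivAt (rcheck κ t₀ r₀) (lam κ u) u := by
  have hcont := continuousOn_lam hκ
  have hint : IntervalIntegrable (lam κ) MeasureTheory.volume u t₀ :=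
    (hcont.mono (ordConnected_Ioo.uIcc_subset hu ht₀)).intervalIntegrable
  have h := (intervalIntegral.integral_hasDerivAt_left hint
    (hcont.stronglyMeasurableAtFilter isOpen_Ioo u hu)
    (hcont.continuousAt (Ioo_mem_nhds hu.1 hu.2))).const_sub r₀
  rwa [neg_neg] at h

noncomputable def posChar (κ t₀ r₀ a b s : ℝ) : ℝ := rcheck κ t₀ r₀ s + (b - rcheck κ t₀ r₀ a)

lemma posChar_self (κ t₀ r₀ a b : ℝ) : posChar κ t₀ r₀ a b a = b := by
  simp [posChar]

lemma posChar_lt_rcheck {κ t₀ r₀ a b : ℝ} (hb : b < rcheck κ t₀ r₀ a) (s : ℝ) :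
    posChar κ t₀ r₀ a b s < rcheck κ t₀ r₀ s := by
  unfold posChar
  linarith

lemma hasDerivAt_posChar {κ t₀ r₀ a b u : ℝ} (hκ : 0 ≤ κ) (ht₀ : t₀ ∈ Ioo (-1) 1)
    (hu : u ∈ Ioo (-1) 1) : HasDerivAt (posChar κ t₀ r₀ a b) (lam κ u) u :=
  (hasDerivAt_rcheck hκ ht₀ hu).add_const _

lemma exists_first_nonpos_or_eq_right {g : ℝ → ℝ} {a T : ℝ} (haT : a < T)
    (hg : ContinuousOn g (Icc a T)) (ha : 0 < g a) :
    ∃ s ∈ Ioc a T, (∀ u ∈ Ico a s, 0 < g u) ∧ 0 ≤ g s ∧ (g s = 0 ∨ s = T) := by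
  by_cases h : ∃ u ∈ Icc a T, g u ≤ 0
  · set A := Icc a T ∩ g ⁻¹' Iic 0
    have hA : IsClosed A := hg.preimage_isClosed_of_isClosed isClosed_Icc isClosed_Iic
    have hAbdd : BddBelow A := bddBelow_Icc.mono inter_subset_left
    obtain ⟨⟨has, hsT⟩, hgs⟩ : sInf A ∈ A := hA.csInf_mem h hAbdd
    have hpos : ∀ u ∈ Ico a (sInf A), 0 < g u := fun u hu =>
      not_le.1 fun hgu => (csInf_le hAbdd ⟨⟨hu.1, hu.2.le.trans hsT⟩, hgu⟩).not_gt hu.2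
    have has' : a < sInf A := has.lt_of_ne fun h => (h ▸ hgs : g a ≤ 0).not_gt ha
    obtain ⟨c, hc, hgc⟩ :=
      intermediate_value_Icc' has (hg.mono (Icc_subset_Icc le_rfl hsT)) ⟨hgs, ha.le⟩
    have hcs : c = sInf A :=
      hc.2.eq_or_lt.resolve_right fun hlt => (hpos c ⟨hc.1, hlt⟩).ne' hgc
    rw [hcs] at hgc
    exact ⟨sInf A, ⟨has', hsT⟩, hpos, hgc.ge, Or.inl hgc⟩
  · push Not at h
    exact ⟨T, ⟨haT, le_rfl⟩, fun u hu => h u ⟨hu.1, hu.2.le⟩, (h T ⟨haT.le, le_rfl⟩).le,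
      Or.inr rfl⟩

lemma region_mem_nhds {κ t₀ r₀ u y : ℝ} {rt : ℝ → ℝ} (hrt : ContinuousAt rt u)
    (hrc : ContinuousAt (rcheck κ t₀ r₀) u) (hu : 0 < u) (hut : u < t₀) (hy₁ : rt u < y)
    (hy₂ : y < rcheck κ t₀ r₀ u) : region κ t₀ r₀ rt ∈ 𝓝 (u, y) := by
  have hfst : ContinuousAt Prod.fst (u, y) := continuousAt_fst
  have hrt' : ContinuousAt (fun p : ℝ × ℝ => rt p.1) (u, y) := hrt.comp hfst
  have hrc' : ContinuousAt (fun p : ℝ × ℝ => rcheck κ t₀ r₀ p.1) (u, y) :=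
    ContinuousAt.comp (g := rcheck κ t₀ r₀) hrc hfst
  filter_upwards [hfst.eventually (lt_mem_nhds hu), hfst.eventually (gt_mem_nhds hut),
    hrt'.eventually_lt continuousAt_snd hy₁, continuousAt_snd.eventually_lt hrc' hy₂]
    with p h₁ h₂ h₃ h₄
  exact ⟨h₁, h₂.le, h₃.le, h₄.le⟩

lemma hasDerivAt_comp_graph {f : ℝ × ℝ → ℝ} {R : ℝ → ℝ} {u c : ℝ}
    (hf : DifferentiableAt ℝ f (u, R u)) (hR : HasDerivAt R c u) :
    HasDerivAt (fun s => f (s, R s)) (pdt f (u, R u) + c * pdr f (u, R u)) u := by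
  have h := hf.hasFDerivAt.comp_hasDerivAt u ((hasDerivAt_id u).prodMk hR)
  have hsplit : ((1 : ℝ), c) = ((1 : ℝ), (0 : ℝ)) + c • ((0 : ℝ), (1 : ℝ)) := by simp
  rwa [hsplit, map_add, map_smul, smul_eq_mul] at h

lemma hasDerivAt_quotient_of_sys38 {κ u : ℝ} {Ub Vb : ℝ × ℝ → ℝ} {D : Set (ℝ × ℝ)}
    {R : ℝ → ℝ} (hκ : 0 ≤ κ) (hsys : Sys38 κ Ub Vb D) (hD : (u, R u) ∈ D) (hu : 0 < u)
    (hu₁ : u < 1) (hU : DifferentiableAt ℝ Ub (u, R u)) (hV : DifferentiableAt ℝ Vb (u, R u))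
    (hR : HasDerivAt R (lam κ u) u) :
    HasDerivAt (fun s => (Ub (s, R s) - Vb (s, R s)) / s)
      (u ^ 2 / F κ u * (Ub (u, R u) - Vb (u, R u))
        - 2 * √(1 - u ^ 2) / F κ u * (u * pdr Vb (u, R u))) u := by
  refine (((hasDerivAt_comp_graph hU hR).sub (hasDerivAt_comp_graph hV hR)).div
    (hasDerivAt_id' u) hu.ne').congr_deriv ?_
  obtain ⟨hUeq, hVeq⟩ := hsys _ hD
  dsimp only at hUeq hVeq
  have hF : F κ u ≠ 0 := (F_pos hκ (by nlinarith)).ne'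
  -- `V̄` is transported along the negative characteristic, hence the extra `2λ ∂ᵣV̄`.
  rw [show ∀ x y z w l : ℝ, x + l * y - (z + l * w) = (x + l * y) - (z - l * w) - 2 * l * w by
    intros; ring, hUeq, hVeq, lam_eq]
  unfold F at hF ⊢
  simp only [Pi.sub_apply]
  field_simp
  ring

lemma abs_quotient_deriv_le {κ t₀ u X Y C₁ C₂ : ℝ} (hκ : 0 ≤ κ) (hu : 0 ≤ u) (hut : u ≤ t₀)
    (ht₀ : t₀ < 1) (hX : |X| ≤ 2 * C₁) (hY : |Y| ≤ C₂) :
    |u ^ 2 / F κ u * X - 2 * √(1 - u ^ 2) / F κ u * Y| ≤ (2 * C₁ * t₀ ^ 2 + 2 * C₂) / F κ t₀ := by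
  have hsq : u ^ 2 ≤ t₀ ^ 2 := pow_le_pow_left₀ hu hut 2
  have ht₀sq : t₀ ^ 2 < 1 := by nlinarith
  have hF₀ : 0 < F κ t₀ := F_pos hκ ht₀sq
  have hFu : F κ t₀ ≤ F κ u := F_le_F_of_sq_le hκ hsq ht₀sq
  have hFu' : 0 < F κ u := hF₀.trans_le hFu
  have hsqrt : √(1 - u ^ 2) ≤ 1 := Real.sqrt_le_one.mpr (by nlinarith)
  calc |u ^ 2 / F κ u * X - 2 * √(1 - u ^ 2) / F κ u * Y|
      ≤ u ^ 2 / F κ u * |X| + 2 * √(1 - u ^ 2) / F κ u * |Y| := by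
        refine (abs_sub _ _).trans_eq ?_
        rw [abs_mul, abs_mul, abs_of_nonneg (div_nonneg (sq_nonneg u) hFu'.le),
          abs_of_nonneg (div_nonneg (by positivity) hFu'.le)]
    _ ≤ t₀ ^ 2 / F κ t₀ * (2 * C₁) + 2 / F κ t₀ * C₂ :=
        add_le_add (mul_le_mul (div_le_div₀ (sq_nonneg _) hsq hF₀ hFu) hX (abs_nonneg _)
            (div_nonneg (sq_nonneg _) hF₀.le))
          (mul_le_mul (div_le_div₀ zero_le_two (by linarith) hF₀ hFu) hY (abs_nonneg _)
            (div_nonneg zero_le_two hF₀.le))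
    _ = (2 * C₁ * t₀ ^ 2 + 2 * C₂) / F κ t₀ := by ring

section

variable {κ t₀ r₀ C₁ C₂ C₃ : ℝ} {rt : ℝ → ℝ} {Ub Vb : ℝ × ℝ → ℝ}

lemma derivBound_nonneg (hκ : 0 ≤ κ) (ht₀ : t₀ < 1)
    (hC₁ : ∀ p ∈ region κ t₀ r₀ rt, |Ub p| ≤ C₁ ∧ |Vb p| ≤ C₁)
    (hC₂ : ∀ p ∈ region κ t₀ r₀ rt, |p.1 * pdr Vb p| ≤ C₂) {p : ℝ × ℝ}
    (hp : p ∈ region κ t₀ r₀ rt) : 0 ≤ (2 * C₁ * t₀ ^ 2 + 2 * C₂) / F κ t₀ := by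
  have hC₁0 : 0 ≤ C₁ := (abs_nonneg _).trans (hC₁ p hp).1
  have hC₂0 : 0 ≤ C₂ := (abs_nonneg _).trans (hC₂ p hp)
  have ht₀0 : 0 < t₀ := hp.1.trans_le hp.2.1
  exact div_nonneg (by positivity) (F_pos hκ (by nlinarith)).le

lemma abs_quotient_le_of_exit (hC₁ : ∀ p ∈ region κ t₀ r₀ rt, |Ub p| ≤ C₁ ∧ |Vb p| ≤ C₁)
    (hC₃ : ∀ t ∈ Ioc (0 : ℝ) t₀, |(Ub (t, rt t) - Vb (t, rt t)) / t| ≤ C₃) {s y : ℝ}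
    (hmem : (s, y) ∈ region κ t₀ r₀ rt) (hexit : rt s = y ∨ s = t₀) :
    |(Ub (s, y) - Vb (s, y)) / s| ≤ max C₃ (2 * C₁ / t₀) := by
  have hs : 0 < s := hmem.1
  rcases hexit with rfl | rfl
  · exact (hC₃ s ⟨hs, hmem.2.1⟩).trans (le_max_left _ _)
  · obtain ⟨hU, hV⟩ := hC₁ _ hmem
    rw [abs_div, abs_of_pos hs]
    exact (div_le_div_of_nonneg_right ((abs_sub _ _).trans (by linarith)) hs.le).trans
      (le_max_right _ _)

variable (hκ : 0 ≤ κ) (ht₀ : t₀ < 1) (hrt : ContinuousOn rt (Icc 0 t₀))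
  (hUC1 : ContDiffOn ℝ 1 Ub (region κ t₀ r₀ rt)) (hVC1 : ContDiffOn ℝ 1 Vb (region κ t₀ r₀ rt))
  (hsys : Sys38 κ Ub Vb (region κ t₀ r₀ rt))
  (hC₁ : ∀ p ∈ region κ t₀ r₀ rt, |Ub p| ≤ C₁ ∧ |Vb p| ≤ C₁)
  (hC₂ : ∀ p ∈ region κ t₀ r₀ rt, |p.1 * pdr Vb p| ≤ C₂)
  (hC₃ : ∀ t ∈ Ioc (0 : ℝ) t₀, |(Ub (t, rt t) - Vb (t, rt t)) / t| ≤ C₃)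
include hκ ht₀ hrt hUC1 hVC1 hsys hC₁ hC₂

lemma abs_quotient_sub_le_along_posChar {a b s₁ : ℝ} (ha : 0 < a) (has₁ : a ≤ s₁) (hs₁ : s₁ ≤ t₀)
    (hb : b < rcheck κ t₀ r₀ a) (hbelow : ∀ u ∈ Ico a s₁, rt u < posChar κ t₀ r₀ a b u)
    (hbelow₁ : rt s₁ ≤ posChar κ t₀ r₀ a b s₁) :
    |(Ub (s₁, posChar κ t₀ r₀ a b s₁) - Vb (s₁, posChar κ t₀ r₀ a b s₁)) / s₁
        - (Ub (a, b) - Vb (a, b)) / a| ≤ (2 * C₁ * t₀ ^ 2 + 2 * C₂) / F κ t₀ * (s₁ - a) := by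
  set R := posChar κ t₀ r₀ a b
  have ht₀' : t₀ ∈ Ioo (-1 : ℝ) 1 := ⟨by linarith, ht₀⟩
  have hIoo : ∀ u ∈ Icc a s₁, u ∈ Ioo (-1 : ℝ) 1 := fun u hu =>
    ⟨by linarith [hu.1], by linarith [hu.2]⟩
  have hRd : ∀ u ∈ Icc a s₁, HasDerivAt R (lam κ u) u := fun u hu =>
    hasDerivAt_posChar hκ ht₀' (hIoo u hu)
  have hmem : ∀ u ∈ Icc a s₁, (u, R u) ∈ region κ t₀ r₀ rt := fun u hu =>
    ⟨ha.trans_le hu.1, hu.2.trans hs₁,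
      hu.2.eq_or_lt.elim (fun h => h ▸ hbelow₁) fun h => (hbelow u ⟨hu.1, h⟩).le,
      (posChar_lt_rcheck hb u).le⟩
  have hdiff : ∀ u ∈ Ico a s₁, DifferentiableAt ℝ Ub (u, R u) ∧ DifferentiableAt ℝ Vb (u, R u) := by
    intro u hu
    have hnhds : region κ t₀ r₀ rt ∈ 𝓝 (u, R u) :=
      region_mem_nhds (hrt.continuousAt (Icc_mem_nhds (by linarith [hu.1]) (by linarith [hu.2])))
        (hasDerivAt_rcheck hκ ht₀' (hIoo u (Ico_subset_Icc_self hu))).continuousAt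
        (ha.trans_le hu.1) (hu.2.trans_le hs₁) (hbelow u hu) (posChar_lt_rcheck hb u)
    have hu' := hmem u (Ico_subset_Icc_self hu)
    exact ⟨(hUC1.differentiableOn one_ne_zero _ hu').differentiableAt hnhds,
      (hVC1.differentiableOn one_ne_zero _ hu').differentiableAt hnhds⟩
  have hcurve : ContinuousOn (fun s => (s, R s)) (Icc a s₁) :=
    continuousOn_id.prodMk fun u hu => (hRd u hu).continuousAt.continuousWithinAt
  have hW : ContinuousOn (fun s => (Ub (s, R s) - Vb (s, R s)) / s) (Icc a s₁) :=
    ((hUC1.continuousOn.comp hcurve hmem).sub (hVC1.continuousOn.comp hcurve hmem)).div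
      continuousOn_id fun u hu => (ha.trans_le hu.1).ne'
  have hW' : ∀ u ∈ Ico a s₁, HasDerivWithinAt (fun s => (Ub (s, R s) - Vb (s, R s)) / s)
      (u ^ 2 / F κ u * (Ub (u, R u) - Vb (u, R u))
        - 2 * √(1 - u ^ 2) / F κ u * (u * pdr Vb (u, R u))) (Ici u) u := fun u hu =>
    (hasDerivAt_quotient_of_sys38 hκ hsys (hmem u (Ico_subset_Icc_self hu)) (ha.trans_le hu.1)
      (by linarith [hu.2]) (hdiff u hu).1 (hdiff u hu).2
      (hRd u (Ico_subset_Icc_self hu))).hasDerivWithinAt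
  have hD : ∀ u ∈ Ico a s₁, ‖u ^ 2 / F κ u * (Ub (u, R u) - Vb (u, R u))
      - 2 * √(1 - u ^ 2) / F κ u * (u * pdr Vb (u, R u))‖
        ≤ (2 * C₁ * t₀ ^ 2 + 2 * C₂) / F κ t₀ := fun u hu => by
    have hu' := hmem u (Ico_subset_Icc_self hu)
    obtain ⟨hU, hV⟩ := hC₁ _ hu'
    exact abs_quotient_deriv_le hκ (ha.le.trans hu.1) (hu.2.le.trans hs₁) ht₀
      ((abs_sub _ _).trans (by linarith)) (hC₂ _ hu')
  have h := norm_image_sub_le_of_norm_deriv_right_le_segment hW hW' hD s₁ ⟨has₁, le_rfl⟩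
  rwa [Real.norm_eq_abs, show R a = b from posChar_self κ t₀ r₀ a b] at h

include hC₃ in
lemma abs_sub_le_of_interior {a b : ℝ} (ha : 0 < a) (hat : a < t₀) (hb₁ : rt a < b)
    (hb₂ : b < rcheck κ t₀ r₀ a) :
    |Ub (a, b) - Vb (a, b)| ≤
      (max C₃ (2 * C₁ / t₀) + (2 * C₁ * t₀ ^ 2 + 2 * C₂) / F κ t₀ * t₀) * a := by
  have ht₀' : t₀ ∈ Ioo (-1 : ℝ) 1 := ⟨by linarith, ht₀⟩
  have hRcont : ContinuousOn (posChar κ t₀ r₀ a b) (Icc a t₀) := fun u hu =>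
    (hasDerivAt_posChar hκ ht₀' ⟨by linarith [hu.1], by linarith [hu.2]⟩).continuousAt
      |>.continuousWithinAt
  obtain ⟨s₁, ⟨has₁, hs₁⟩, hpos, hnonneg, hexit⟩ :=
    exists_first_nonpos_or_eq_right (g := fun s => posChar κ t₀ r₀ a b s - rt s) hat
      (hRcont.sub (hrt.mono (Icc_subset_Icc ha.le le_rfl))) (by simpa [posChar_self] using hb₁)
  have hlip := abs_quotient_sub_le_along_posChar hκ ht₀ hrt hUC1 hVC1 hsys hC₁ hC₂ ha has₁.le hs₁
    hb₂ (fun u hu => sub_pos.1 (hpos u hu)) (sub_nonneg.1 hnonneg)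
  have hend := abs_quotient_le_of_exit (s := s₁) (y := posChar κ t₀ r₀ a b s₁) hC₁ hC₃
    ⟨ha.trans has₁, hs₁, sub_nonneg.1 hnonneg, (posChar_lt_rcheck hb₂ s₁).le⟩
    (hexit.imp (fun h => (sub_eq_zero.1 h).symm) id)
  have hK := derivBound_nonneg hκ ht₀ hC₁ hC₂ (p := (a, b)) ⟨ha, hat.le, hb₁.le, hb₂.le⟩
  have hKt : (2 * C₁ * t₀ ^ 2 + 2 * C₂) / F κ t₀ * (s₁ - a)
      ≤ (2 * C₁ * t₀ ^ 2 + 2 * C₂) / F κ t₀ * t₀ := mul_le_mul_of_nonneg_left (by linarith) hK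
  have hWa : |(Ub (a, b) - Vb (a, b)) / a|
      ≤ max C₃ (2 * C₁ / t₀) + (2 * C₁ * t₀ ^ 2 + 2 * C₂) / F κ t₀ * t₀ := by
    have h := abs_sub_abs_le_abs_sub ((Ub (a, b) - Vb (a, b)) / a)
      ((Ub (s₁, posChar κ t₀ r₀ a b s₁) - Vb (s₁, posChar κ t₀ r₀ a b s₁)) / s₁)
    rw [abs_sub_comm] at h
    linarith
  rwa [abs_div, abs_of_pos ha, div_le_iff₀ ha] at hWa

include hC₃ in
lemma abs_sub_le_of_rt_lt {t r : ℝ} (hp : (t, r) ∈ region κ t₀ r₀ rt) (htt₀ : t < t₀)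
    (hr : rt t < r) :
    |Ub (t, r) - Vb (t, r)| ≤
      (max C₃ (2 * C₁ / t₀) + (2 * C₁ * t₀ ^ 2 + 2 * C₂) / F κ t₀ * t₀) * t := by
  have hmaps : MapsTo (fun r' => (t, r')) (Ioo (rt t) r) (region κ t₀ r₀ rt) := fun r' hr' =>
    ⟨hp.1, hp.2.1, hr'.1.le, hr'.2.le.trans hp.2.2.2⟩
  have hslice : ContinuousWithinAt (fun r' => (t, r')) (Ioo (rt t) r) r :=
    (continuous_const.prodMk continuous_id).continuousWithinAt
  have hcont : ContinuousWithinAt (fun r' => |Ub (t, r') - Vb (t, r')|) (Ioo (rt t) r) r :=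
    (((hUC1.continuousOn _ hp).comp hslice hmaps).sub
      ((hVC1.continuousOn _ hp).comp hslice hmaps)).abs
  have hcl : r ∈ closure (Ioo (rt t) r) := by
    rw [closure_Ioo hr.ne]
    exact right_mem_Icc.2 hr.le
  exact hcont.closure_le hcl continuousWithinAt_const fun r' hr' =>
    abs_sub_le_of_interior hκ ht₀ hrt hUC1 hVC1 hsys hC₁ hC₂ hC₃ hp.1 htt₀ hr'.1
      (hr'.2.trans_le hp.2.2.2)

end

theorem stmt_6_general (κ t₀ r₀ : ℝ) (hκ : 0 < κ) (ht₀ : t₀ ∈ Set.Ioo (0:ℝ) 1)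
    (rt : ℝ → ℝ)
    (hrtC1 : ContDiffOn ℝ 1 rt (Set.Icc 0 t₀))
    (Ub Vb : ℝ × ℝ → ℝ)
    (hUC1 : ContDiffOn ℝ 1 Ub (region κ t₀ r₀ rt))
    (hVC1 : ContDiffOn ℝ 1 Vb (region κ t₀ r₀ rt))
    (hsys : Sys38 κ Ub Vb (region κ t₀ r₀ rt))
    (C₁ C₂ C₃ : ℝ)
    (hC₁ : ∀ p ∈ region κ t₀ r₀ rt, |Ub p| ≤ C₁ ∧ |Vb p| ≤ C₁)
    (hC₂ : ∀ p ∈ region κ t₀ r₀ rt, |p.1 * pdr Vb p| ≤ C₂)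
    (hC₃ : ∀ t ∈ Set.Ioc (0:ℝ) t₀, |(Ub (t, rt t) - Vb (t, rt t)) / t| ≤ C₃) :
    ∃ C : ℝ, ∀ p ∈ region κ t₀ r₀ rt, |Ub p - Vb p| ≤ C * p.1 := by
  refine ⟨max C₃ (2 * C₁ / t₀) + (2 * C₁ * t₀ ^ 2 + 2 * C₂) / F κ t₀ * t₀, ?_⟩
  rintro ⟨t, r⟩ hp
  by_cases hΓ : rt t = r ∨ t = t₀
  · have ht : 0 < t := hp.1
    have hW := abs_quotient_le_of_exit hC₁ hC₃ hp hΓ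
    rw [abs_div, abs_of_pos ht, div_le_iff₀ ht] at hW
    have hK := mul_nonneg (mul_nonneg (derivBound_nonneg hκ.le ht₀.2 hC₁ hC₂ hp) ht₀.1.le) ht.le
    dsimp only
    linarith
  · push Not at hΓ
    exact abs_sub_le_of_rt_lt hκ.le ht₀.2 hrtC1.continuousOn hUC1 hVC1 hsys hC₁ hC₂ hC₃ hp
      (hp.2.1.lt_of_ne hΓ.2) (hp.2.2.1.lt_of_ne hΓ.1)

/-- Lemma 3.4 (uniform boundedness of the singular quotient W̄ = (Ū−V̄)/t). -/
theorem stmt_6 (κ t₀ r₀ : ℝ) (hκ : 0 < κ) (ht₀ : t₀ ∈ Set.Ioo (0:ℝ) 1)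
    (hr₀ : 0 < r₀) (rt : ℝ → ℝ)
    (hrtC1 : ContDiffOn ℝ 1 rt (Set.Icc 0 t₀))
    (hrtmono : StrictMonoOn rt (Set.Icc 0 t₀))
    (hrt0 : rt 0 = 0) (hrtt0 : rt t₀ = r₀)
    (hspace : ∀ t ∈ Set.Ioc (0:ℝ) t₀, lam κ t < deriv rt t)
    (Ub Vb : ℝ × ℝ → ℝ)
    (hUC1 : ContDiffOn ℝ 1 Ub (region κ t₀ r₀ rt))
    (hVC1 : ContDiffOn ℝ 1 Vb (region κ t₀ r₀ rt))
    (hsys : Sys38 κ Ub Vb (region κ t₀ r₀ rt))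
    (hUcont : ContinuousOn Ub (region κ t₀ r₀ rt ∪
      {p : ℝ × ℝ | ∃ t ∈ Set.Ioc (0:ℝ) t₀, p = (t, rt t)}))
    (hVcont : ContinuousOn Vb (region κ t₀ r₀ rt ∪
      {p : ℝ × ℝ | ∃ t ∈ Set.Ioc (0:ℝ) t₀, p = (t, rt t)}))
    (C₁ C₂ C₃ : ℝ)
    (hC₁ : ∀ p ∈ region κ t₀ r₀ rt, |Ub p| ≤ C₁ ∧ |Vb p| ≤ C₁)
    (hC₂ : ∀ p ∈ region κ t₀ r₀ rt, |p.1 * pdr Vb p| ≤ C₂)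
    (hC₃ : ∀ t ∈ Set.Ioc (0:ℝ) t₀, |(Ub (t, rt t) - Vb (t, rt t)) / t| ≤ C₃) :
    ∃ C : ℝ, ∀ p ∈ region κ t₀ r₀ rt, |Ub p - Vb p| ≤ C * p.1 :=
  stmt_6_general κ t₀ r₀ hκ ht₀ rt hrtC1 Ub Vb hUC1 hVC1 hsys C₁ C₂ C₃ hC₁ hC₂ hC₃
end
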